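/- arXiv:1507.08654 — 8 statements merged into one kernel-verified Lean document; each statement's English description precedes it below -/
import Mathlib

section
/- Let G be a finite simple graph and n ≥ 1 a natural number. If a(G;x) = n·x, i.e., a_1(G) = n and a_k(G) = 0 for every k ≥ 2, then G is isomorphic to the empty (edgeless) graph E_n on n vertices; that is, G has exactly n vertices and no edges. -/
/-!
A connected component of a graph is a connected strong alliance, since every vertex has all its
neighbours inside its own component. So if `G` has an edge, the component containing it is a
counted alliance with at least two vertices, and `a_k(G) ≠ 0` for some `k ≥ 2`. Hence `G` is
edgeless, and then every singleton is a counted alliance, so `a_1(G)` is the number of vertices.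
-/

open SimpleGraph Polynomial Finset

/-- `δ_S(v)`: the number of neighbors of `v` lying in the set `S`. -/
noncomputable def degIn {V : Type*} (G : SimpleGraph V) (S : Finset V) (v : V) : ℕ :=
  ((S : Set V) ∩ G.neighborSet v).ncard

/-- `δ(v)`: the degree of `v` in `G`. -/
noncomputable def degOf {V : Type*} (G : SimpleGraph V) (v : V) : ℕ :=
  (G.neighborSet v).ncard

/-- `S` is a strong defensive alliance in `G`: `S` is nonempty and every `v ∈ S`
satisfies `2·δ_S(v) ≥ δ(v)`. -/
def IsStrongAlliance {V : Type*} (G : SimpleGraph V) (S : Finset V) : Prop :=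
  S.Nonempty ∧ ∀ v ∈ S, degOf G v ≤ 2 * degIn G S v

/-- The alliances counted by the strong alliance polynomial: strong defensive alliances
whose induced subgraph is connected. -/
def IsCountedAlliance {V : Type*} (G : SimpleGraph V) (S : Finset V) : Prop :=
  IsStrongAlliance G S ∧ (G.induce (S : Set V)).Connected

/-- `a_k(G)`: the number of strong defensive alliances of cardinality `k` in `G`
whose induced subgraph is connected. -/
noncomputable def aCoeff {V : Type*} (G : SimpleGraph V) (k : ℕ) : ℕ :=
  {S : Finset V | S.card = k ∧ IsCountedAlliance G S}.ncard

/-- The strong alliance polynomial `a(G;x) = Σ_k a_k(G) x^k`. -/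
noncomputable def alliancePoly {V : Type*} [Fintype V] (G : SimpleGraph V) : Polynomial ℤ :=
  ∑ k ∈ Finset.range (Fintype.card V + 1), Polynomial.C (aCoeff G k : ℤ) * Polynomial.X ^ k

section

variable {V : Type*}

lemma degIn_eq_degOf_of_neighborSet_subset {G : SimpleGraph V} {S : Finset V} {v : V}
    (h : G.neighborSet v ⊆ S) : degIn G S v = degOf G v := by
  rw [degIn, degOf, Set.inter_eq_self_of_subset_right h]

lemma degOf_bot (v : V) : degOf (⊥ : SimpleGraph V) v = 0 := by
  simp [degOf]

lemma isCountedAlliance_of_coe_eq_supp {G : SimpleGraph V} {S : Finset V}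
    {C : G.ConnectedComponent} (hS : (S : Set V) = C.supp) : IsCountedAlliance G S := by
  refine ⟨⟨?_, fun v hv => ?_⟩, hS ▸ (C.maximal_connected_induce_supp).prop⟩
  · simpa [← Finset.coe_nonempty, hS] using C.nonempty_supp
  · have hsub : G.neighborSet v ⊆ S := by
      rw [hS]
      exact fun w hw => C.mem_supp_of_adj_mem_supp (hS ▸ hv) hw
    rw [degIn_eq_degOf_of_neighborSet_subset hsub]
    omega

lemma isCountedAlliance_bot_singleton (v : V) : IsCountedAlliance (⊥ : SimpleGraph V) {v} := by
  refine ⟨⟨singleton_nonempty v, fun w _ => by simp [degOf_bot]⟩, ?_⟩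
  rw [coe_singleton, induce_singleton_eq_top]
  exact connected_top

lemma aCoeff_card_ne_zero [Finite V] {G : SimpleGraph V} {S : Finset V}
    (h : IsCountedAlliance G S) : aCoeff G S.card ≠ 0 :=
  Set.ncard_ne_zero_of_mem (a := S) ⟨rfl, h⟩

lemma eq_bot_of_aCoeff_eq_zero [Finite V] (G : SimpleGraph V)
    (h : ∀ k : ℕ, 2 ≤ k → aCoeff G k = 0) : G = ⊥ := by
  by_contra hG
  obtain ⟨u, v, huv⟩ := ne_bot_iff_exists_adj.mp hG
  set C := G.connectedComponentMk u
  set S := (Set.toFinite C.supp).toFinset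
  have hS : (S : Set V) = C.supp := Set.Finite.coe_toFinset _
  have hu : u ∈ S := by simp [S, C]
  have hv : v ∈ S := by simpa [S, C] using (C.mem_supp_congr_adj huv).mp rfl
  have hcard : 2 ≤ S.card := one_lt_card.mpr ⟨u, hu, v, hv, huv.ne⟩
  exact aCoeff_card_ne_zero (isCountedAlliance_of_coe_eq_supp hS) (h S.card hcard)

lemma aCoeff_bot_one [Fintype V] : aCoeff (⊥ : SimpleGraph V) 1 = Fintype.card V := by
  have hsingletons : {S : Finset V | S.card = 1 ∧ IsCountedAlliance ⊥ S}
      = Set.range (fun v : V => ({v} : Finset V)) := by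
    ext S
    simp only [Set.mem_ofPred_eq, Set.mem_range, card_eq_one]
    constructor
    · rintro ⟨⟨v, rfl⟩, -⟩
      exact ⟨v, rfl⟩
    · rintro ⟨v, rfl⟩
      exact ⟨⟨v, rfl⟩, isCountedAlliance_bot_singleton v⟩
  rw [aCoeff, hsingletons, Set.ncard_range_of_injective singleton_injective,
    Nat.card_eq_fintype_card]

end

theorem stmt_2_general {V : Type*} [Fintype V] (G : SimpleGraph V) (n : ℕ)
    (h1 : aCoeff G 1 = n) (h2 : ∀ k : ℕ, 2 ≤ k → aCoeff G k = 0) :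
    Fintype.card V = n ∧ G = ⊥ := by
  obtain rfl := eq_bot_of_aCoeff_eq_zero G h2
  exact ⟨aCoeff_bot_one.symm.trans h1, rfl⟩

/-- If `a(G;x) = n·x` with `n ≥ 1`, i.e. `a_1(G) = n` and `a_k(G) = 0` for all
`k ≥ 2`, then `G` is isomorphic to the edgeless graph on `n` vertices: `G` has exactly `n`
vertices and no edges. -/
theorem stmt_2 {V : Type*} [Fintype V] (G : SimpleGraph V) (n : ℕ) (hn : 1 ≤ n)
    (h1 : aCoeff G 1 = n) (h2 : ∀ k : ℕ, 2 ≤ k → aCoeff G k = 0) :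
    Fintype.card V = n ∧ G = ⊥ :=
  stmt_2_general G n h1 h2
end

section
/- For a finite simple graph G with m edges, a_2(G) = m if and only if every vertex of G has degree at most 2 (equivalently, every connected component of G is a path graph or a cycle graph). -/
open SimpleGraph Polynomial Finset

/-! A set `{u, v}` of two vertices is a connected strong alliance exactly when `uv` is an edge
whose endpoints have degree at most `2`: inside `{u, v}` each endpoint has one neighbour.
So `a₂(G)` counts the edges with both endpoints of degree at most `2`, and this is all `m`
edges precisely when no vertex has degree `3` or more, since such a vertex lies on an edge. -/

section

variable {V : Type*} (G : SimpleGraph V)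

lemma adj_of_induce_pair_connected {u v : V} (huv : u ≠ v)
    (h : (G.induce ({u, v} : Set V)).Connected) : G.Adj u v := by
  obtain ⟨p⟩ := h.preconnected ⟨u, by simp⟩ ⟨v, by simp⟩
  cases p with
  | nil => exact absurd rfl huv
  | @cons _ w _ hw _ =>
    obtain ⟨x, rfl | rfl⟩ := w
    · exact absurd hw (SimpleGraph.irrefl _)
    · exact hw

variable [DecidableEq V]

lemma degIn_pair_of_adj {u v : V} (h : G.Adj u v) : degIn G {u, v} u = 1 := by
  have : (({u, v} : Finset V) : Set V) ∩ G.neighborSet u = {v} := by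
    ext x
    simp only [coe_pair, Set.mem_inter_iff, Set.mem_insert_iff, Set.mem_singleton_iff,
      mem_neighborSet]
    constructor
    · rintro ⟨rfl | rfl, hx⟩
      · exact absurd hx (G.irrefl)
      · rfl
    · rintro rfl; exact ⟨Or.inr rfl, h⟩
  rw [degIn, this, Set.ncard_singleton]

lemma isCountedAlliance_pair_iff {u v : V} (huv : u ≠ v) :
    IsCountedAlliance G {u, v} ↔ G.Adj u v ∧ degOf G u ≤ 2 ∧ degOf G v ≤ 2 := by
  constructor
  · rintro ⟨⟨-, hdeg⟩, hconn⟩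
    have hadj := adj_of_induce_pair_connected G huv (by rwa [coe_pair] at hconn)
    have hu := hdeg u (by simp)
    have hv := hdeg v (by simp)
    rw [degIn_pair_of_adj G hadj] at hu
    rw [pair_comm, degIn_pair_of_adj G hadj.symm] at hv
    exact ⟨hadj, by omega, by omega⟩
  · rintro ⟨hadj, hu, hv⟩
    refine ⟨⟨⟨u, by simp⟩, ?_⟩, by rw [coe_pair]; exact induce_pair_connected_of_adj hadj⟩
    intro w hw
    rcases mem_insert.1 hw with rfl | hw
    · rw [degIn_pair_of_adj G hadj]; omega
    · rw [mem_singleton.1 hw, pair_comm, degIn_pair_of_adj G hadj.symm]; omega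

lemma Sym2.toFinset_injective : Function.Injective (Sym2.toFinset : Sym2 V → Finset V) :=
  fun _ _ h => Sym2.ext fun x => by rw [← Sym2.mem_toFinset, h, Sym2.mem_toFinset]

lemma countedPairs_eq_image :
    {S : Finset V | S.card = 2 ∧ IsCountedAlliance G S} =
      Sym2.toFinset '' {e ∈ G.edgeSet | ∀ x ∈ e, degOf G x ≤ 2} := by
  ext S
  constructor
  · rintro ⟨hcard, hS⟩
    obtain ⟨u, v, huv, rfl⟩ := card_eq_two.1 hcard
    obtain ⟨hadj, hu, hv⟩ := (isCountedAlliance_pair_iff G huv).1 hS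
    exact ⟨s(u, v), ⟨hadj, by simp [hu, hv]⟩, Sym2.toFinset_mk_eq⟩
  · rintro ⟨e, ⟨he, hdeg⟩, rfl⟩
    induction e using Sym2.ind with
    | _ u v =>
      have hadj : G.Adj u v := he
      rw [Sym2.toFinset_mk_eq]
      exact ⟨card_pair (G.ne_of_adj hadj), (isCountedAlliance_pair_iff G (G.ne_of_adj hadj)).2
        ⟨hadj, hdeg u (by simp), hdeg v (by simp)⟩⟩

end

lemma aCoeff_two_eq_ncard {V : Type*} (G : SimpleGraph V) :
    aCoeff G 2 = {e ∈ G.edgeSet | ∀ x ∈ e, degOf G x ≤ 2}.ncard := by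
  classical
  rw [aCoeff, countedPairs_eq_image, Set.ncard_image_of_injective _ Sym2.toFinset_injective]

lemma forall_mem_edgeSet_degOf_le_iff {V : Type*} (G : SimpleGraph V) (k : ℕ) :
    (∀ e ∈ G.edgeSet, ∀ x ∈ e, degOf G x ≤ k) ↔ ∀ v, degOf G v ≤ k := by
  refine ⟨fun h v => ?_, fun h _ _ x _ => h x⟩
  by_contra! hv
  obtain ⟨w, hw⟩ : (G.neighborSet v).Nonempty :=
    Set.nonempty_of_ncard_ne_zero (by unfold degOf at hv; omega)
  exact hv.not_ge (h s(v, w) hw v (Sym2.mem_mk_left v w))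

/-- For a finite simple graph `G` with `m` edges, `a_2(G) = m` if and only if
every vertex of `G` has degree at most `2`. -/
theorem stmt_4 {V : Type*} [Fintype V] (G : SimpleGraph V) :
    aCoeff G 2 = G.edgeSet.ncard ↔ ∀ v : V, degOf G v ≤ 2 := by
  rw [aCoeff_two_eq_ncard, ← forall_mem_edgeSet_degOf_le_iff, ← Set.sep_eq_self_iff_mem_true]
  exact ⟨fun h => Set.eq_of_subset_of_ncard_le (Set.sep_subset _ _) h.ge, fun h => by rw [h]⟩
end

section
/- For the path graph P_n on n ≥ 2 vertices: a_1(P_n) = 0, and for every k with 2 ≤ k ≤ n, a_k(P_n) = n + 1 − k. Equivalently, a(P_n; x) = Σ_{i=2}^{n} (n + 1 − i) x^i. -/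
open SimpleGraph Polynomial Finset

/-! Every vertex of `P_n` has degree at most 2, so a set `S` is a strong alliance as soon as each
of its vertices has a neighbour in `S`; a singleton never is, since for `n ≥ 2` no vertex is
isolated. A walk in the subgraph induced by `S` visits every vertex between its endpoints, so `S`
induces a connected subgraph exactly when it is a segment `{a, …, a + k - 1}`. The counted
alliances of size `k ≥ 2` are therefore the `n + 1 - k` segments of length `k`. -/

section Alliance

variable {V : Type*} {G : SimpleGraph V}

lemma one_le_degIn_of_adj {S : Finset V} {u v : V} (hu : u ∈ S) (huv : G.Adj v u) :
    1 ≤ degIn G S v :=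
  (Set.ncard_pos (S.finite_toSet.inter_of_left _)).mpr ⟨u, hu, huv⟩

lemma one_le_degOf_of_adj [Finite V] {u v : V} (huv : G.Adj v u) : 1 ≤ degOf G v :=
  (Set.ncard_pos).mpr ⟨u, huv⟩

lemma degIn_singleton_self (v : V) : degIn G {v} v = 0 := by
  simp [degIn]

lemma not_isStrongAlliance_singleton [Finite V] {u v : V} (huv : G.Adj v u) :
    ¬ IsStrongAlliance G {v} := fun ⟨_, h⟩ => by
  have := h v (mem_singleton_self v)
  rw [degIn_singleton_self] at this
  have := one_le_degOf_of_adj huv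
  omega

lemma isStrongAlliance_of_degOf_le_two {S : Finset V} (hS : S.Nonempty)
    (h : ∀ v ∈ S, degOf G v ≤ 2 ∧ ∃ u ∈ S, G.Adj v u) : IsStrongAlliance G S := by
  refine ⟨hS, fun v hv => ?_⟩
  obtain ⟨hdeg, u, hu, huv⟩ := h v hv
  have := one_le_degIn_of_adj hu huv
  omega

lemma aCoeff_eq_zero {k : ℕ} (h : ∀ S : Finset V, #S = k → ¬ IsCountedAlliance G S) :
    aCoeff G k = 0 := by
  have hempty : {S : Finset V | #S = k ∧ IsCountedAlliance G S} = ∅ :=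
    Set.eq_empty_of_forall_notMem fun S hS => h S hS.1 hS.2
  rw [aCoeff, hempty, Set.ncard_empty]

lemma aCoeff_zero (G : SimpleGraph V) : aCoeff G 0 = 0 :=
  aCoeff_eq_zero fun _ hS ⟨⟨hne, _⟩, _⟩ => hne.ne_empty (card_eq_zero.mp hS)

lemma aCoeff_one [Finite V] (hG : ∀ v, ∃ u, G.Adj v u) : aCoeff G 1 = 0 :=
  aCoeff_eq_zero fun S hS ⟨hS', _⟩ => by
    obtain ⟨v, rfl⟩ := card_eq_one.mp hS
    obtain ⟨u, huv⟩ := hG v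
    exact not_isStrongAlliance_singleton huv hS'

lemma alliancePoly_eq_sum_Icc [Fintype V] (hG : aCoeff G 1 = 0) :
    alliancePoly G = ∑ k ∈ Icc 2 (Fintype.card V), C (aCoeff G k : ℤ) * X ^ k := by
  rw [alliancePoly]
  refine (sum_subset (fun k hk => ?_) fun k hk hk' => ?_).symm
  · simp only [mem_Icc, mem_range] at hk ⊢
    omega
  · obtain rfl | rfl : k = 0 ∨ k = 1 := by simp only [mem_Icc, mem_range] at hk hk'; omega
    · simp [aCoeff_zero]
    · simp [hG]

end Alliance

section Path

variable {n : ℕ}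

lemma degOf_pathGraph_le_two (v : Fin n) : degOf (pathGraph n) v ≤ 2 := by
  have hmaps :
      ∀ u ∈ (pathGraph n).neighborSet v, u.val ∈ ({v.val + 1, v.val - 1} : Set ℕ) := by
    intro u hu
    rw [mem_neighborSet, pathGraph_adj] at hu
    simp only [Set.mem_insert_iff, Set.mem_singleton_iff]
    omega
  calc degOf (pathGraph n) v ≤ ({v.val + 1, v.val - 1} : Set ℕ).ncard :=
        Set.ncard_le_ncard_of_injOn Fin.val hmaps Fin.val_injective.injOn
    _ ≤ 2 := (Set.ncard_insert_le _ _).trans (by simp)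

lemma pathGraph_exists_adj (hn : 2 ≤ n) (v : Fin n) : ∃ u, (pathGraph n).Adj v u := by
  simp only [pathGraph_adj]
  by_cases hv : v.val + 1 < n
  · exact ⟨⟨v.val + 1, hv⟩, Or.inl rfl⟩
  · exact ⟨⟨v.val - 1, by omega⟩, Or.inr (by simp only; omega)⟩

def pathSegment (n a k : ℕ) : Finset (Fin n) := {v | a ≤ v.val ∧ v.val < a + k}

@[simp]
lemma mem_pathSegment {a k : ℕ} {v : Fin n} :
    v ∈ pathSegment n a k ↔ a ≤ v.val ∧ v.val < a + k := by
  simp [pathSegment]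

lemma card_pathSegment {a k : ℕ} (h : a + k ≤ n) : #(pathSegment n a k) = k := by
  have : (pathSegment n a k).map Fin.valEmbedding = Ico a (a + k) := by
    ext m
    simp only [mem_map, mem_pathSegment, Fin.valEmbedding_apply, mem_Ico]
    exact ⟨fun ⟨v, hv, hvm⟩ => hvm ▸ hv, fun hm => ⟨⟨m, by omega⟩, hm, rfl⟩⟩
  rw [← card_map, this, Nat.card_Ico]
  omega

lemma pathSegment_injOn {k : ℕ} (hk : 0 < k) :
    Set.InjOn (pathSegment n · k) {a | a + k ≤ n} := by
  intro a ha b hb hab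
  simp only [Set.mem_ofPred_eq] at ha hb hab
  have ha' : (⟨a, by omega⟩ : Fin n) ∈ pathSegment n b k :=
    hab ▸ mem_pathSegment.mpr ⟨le_rfl, Nat.lt_add_of_pos_right hk⟩
  have hb' : (⟨b, by omega⟩ : Fin n) ∈ pathSegment n a k :=
    hab ▸ mem_pathSegment.mpr ⟨le_rfl, Nat.lt_add_of_pos_right hk⟩
  simp only [mem_pathSegment] at ha' hb'
  omega

lemma pathSegment_connected {a k : ℕ} (hk : 0 < k) (h : a + k ≤ n) :
    ((pathGraph n).induce (pathSegment n a k : Set (Fin n))).Connected := by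
  obtain ⟨j, rfl⟩ : ∃ j, k = j + 1 := ⟨k - 1, by omega⟩
  let shift : pathGraph (j + 1) →g (pathGraph n).induce (pathSegment n a (j + 1) : Set (Fin n)) :=
    { toFun := fun i => ⟨⟨a + i, by omega⟩, by simp only [mem_coe, mem_pathSegment]; omega⟩
      map_rel' := fun hij => by simp only [induce_adj, pathGraph_adj] at hij ⊢; omega }
  refine (pathGraph_connected j).map shift fun v => ⟨⟨v.1.val - a, ?_⟩, ?_⟩
  · have := mem_pathSegment.mp v.2
    omega
  · have := mem_pathSegment.mp v.2
    exact Subtype.ext (Fin.ext (show a + (v.1.val - a) = v.1.val by omega))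

lemma mem_of_walk_induce_pathGraph {S : Set (Fin n)} {u v : S}
    (p : ((pathGraph n).induce S).Walk u v) {c : Fin n} (huc : u.1.val ≤ c.val)
    (hcv : c.val ≤ v.1.val) : c ∈ S := by
  induction p with
  | @nil x => exact (Fin.ext (by omega) : c = x.1) ▸ x.2
  | @cons a b w hab q ih =>
    rw [induce_adj, pathGraph_adj] at hab
    by_cases hc : c.val = a.1.val
    · exact (Fin.ext hc : c = a) ▸ a.2
    · exact ih (by omega) hcv

lemma exists_eq_pathSegment_of_connected {S : Finset (Fin n)}
    (hS : ((pathGraph n).induce (S : Set (Fin n))).Connected) :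
    ∃ a, a + #S ≤ n ∧ S = pathSegment n a #S := by
  obtain ⟨⟨u, hu⟩⟩ := hS.nonempty
  obtain ⟨m, hmS, hm⟩ : ∃ m ∈ S, ∀ v ∈ S, m ≤ v :=
    ⟨S.min' ⟨u, hu⟩, S.min'_mem _, S.min'_le⟩
  obtain ⟨M, hMS, hM⟩ : ∃ M ∈ S, ∀ v ∈ S, v ≤ M :=
    ⟨S.max' ⟨u, hu⟩, S.max'_mem _, S.le_max'⟩
  obtain ⟨p⟩ := hS.preconnected ⟨m, hmS⟩ ⟨M, hMS⟩
  have hSeq : S = pathSegment n m (M + 1 - m) := by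
    ext v
    rw [mem_pathSegment]
    refine ⟨fun hv => ?_, fun hv => mem_of_walk_induce_pathGraph p hv.1 (by simp only; omega)⟩
    have := Fin.le_iff_val_le_val.mp (hm v hv)
    have := Fin.le_iff_val_le_val.mp (hM v hv)
    omega
  have hcard : #S = M + 1 - m := by
    rw [congrArg card hSeq]
    exact card_pathSegment (by omega)
  exact ⟨m, by omega, hcard ▸ hSeq⟩

lemma isCountedAlliance_pathSegment {a k : ℕ} (hk : 2 ≤ k) (h : a + k ≤ n) :
    IsCountedAlliance (pathGraph n) (pathSegment n a k) := by
  refine ⟨isStrongAlliance_of_degOf_le_two (card_pos.mp (by rw [card_pathSegment h]; omega))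
    fun v hv => ⟨degOf_pathGraph_le_two v, ?_⟩, pathSegment_connected (by omega) h⟩
  rw [mem_pathSegment] at hv
  by_cases hv' : v.val + 1 < a + k
  · exact ⟨⟨v.val + 1, by omega⟩, mem_pathSegment.mpr ⟨Nat.le_succ_of_le hv.1, hv'⟩,
      pathGraph_adj.mpr (Or.inl rfl)⟩
  · refine ⟨⟨v.val - 1, by omega⟩, mem_pathSegment.mpr ⟨?_, ?_⟩,
      pathGraph_adj.mpr (Or.inr ?_)⟩ <;> simp only <;> omega

lemma aCoeff_pathGraph {k : ℕ} (hk : 2 ≤ k) (hkn : k ≤ n) :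
    aCoeff (pathGraph n) k = n + 1 - k := by
  have hset : {S : Finset (Fin n) | #S = k ∧ IsCountedAlliance (pathGraph n) S} =
      (pathSegment n · k) '' {a | a + k ≤ n} := by
    ext S
    refine ⟨fun ⟨hS, _, hconn⟩ => ?_, ?_⟩
    · obtain ⟨a, ha, hSa⟩ := exists_eq_pathSegment_of_connected hconn
      rw [hS] at ha hSa
      exact ⟨a, ha, hSa.symm⟩
    · rintro ⟨a, ha, rfl⟩
      exact ⟨card_pathSegment ha, isCountedAlliance_pathSegment hk ha⟩
  have hstarts : {a | a + k ≤ n} = (range (n + 1 - k) : Set ℕ) := by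
    ext a
    simp only [Set.mem_ofPred_eq, coe_range, Set.mem_Iio]
    omega
  rw [aCoeff, hset, (pathSegment_injOn (by omega)).ncard_image, hstarts,
    Set.ncard_coe_finset, card_range]

end Path

/-- For the path graph `P_n` on `n ≥ 2` vertices: `a_1(P_n) = 0`, for every
`2 ≤ k ≤ n` we have `a_k(P_n) = n + 1 − k`, and `a(P_n;x) = Σ_{i=2}^n (n+1−i) x^i`. -/
theorem stmt_8 (n : ℕ) (hn : 2 ≤ n) :
    aCoeff (SimpleGraph.pathGraph n) 1 = 0 ∧
    (∀ k : ℕ, 2 ≤ k → k ≤ n → aCoeff (SimpleGraph.pathGraph n) k = n + 1 - k) ∧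
    alliancePoly (SimpleGraph.pathGraph n) =
      ∑ i ∈ Finset.Icc 2 n, Polynomial.C ((n + 1 - i : ℕ) : ℤ) * Polynomial.X ^ i := by
  have hone : aCoeff (pathGraph n) 1 = 0 := aCoeff_one (pathGraph_exists_adj hn)
  refine ⟨hone, fun k => aCoeff_pathGraph, ?_⟩
  rw [alliancePoly_eq_sum_Icc hone, Fintype.card_fin]
  exact sum_congr rfl fun k hk => by rw [aCoeff_pathGraph (mem_Icc.mp hk).1 (mem_Icc.mp hk).2]
end

section
/- For the cycle graph C_n on n ≥ 3 vertices: a_1(C_n) = 0, a_k(C_n) = n for every k with 2 ≤ k ≤ n − 1, and a_n(C_n) = 1. Equivalently, a(C_n; x) = n·Σ_{i=2}^{n−1} x^i + x^n. -/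
open SimpleGraph Polynomial Finset

/-!
Every vertex of `C_n` has degree 2, so a set is a strong alliance iff each of its members has a
neighbour inside it; for a set inducing a connected subgraph this holds iff it has at least two
vertices. A proper subset inducing a connected subgraph is an arc `{j, j + 1, …, j + k - 1}`: start
at a member whose predecessor is missing and walk forward to the first gap. For `k ≤ n - 1` the `n`
arcs of length `k` are distinct, since `j` is the only member of its arc whose predecessor is
missing.
-/

section TwoRegular

variable {V : Type*} {G : SimpleGraph V}

theorem SimpleGraph.Preconnected.subset_of_adj_closed {S A : Set V}
    (hS : (G.induce S).Preconnected) {a : V} (haS : a ∈ S) (haA : a ∈ A)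
    (hA : ∀ x ∈ A, ∀ y ∈ S, G.Adj x y → y ∈ A) : S ⊆ A := by
  intro b hbS
  obtain ⟨w⟩ := hS ⟨a, haS⟩ ⟨b, hbS⟩
  suffices ∀ {x y : S}, (G.induce S).Walk x y → (x : V) ∈ A → (y : V) ∈ A from this w haA
  intro x y w
  induction w with
  | nil => exact id
  | cons hxy _ ih => exact fun hx => ih (hA _ hx _ (Subtype.prop _) hxy)

theorem isStrongAlliance_iff_of_degOf_eq_two (hG : ∀ v, degOf G v = 2) (S : Finset V) :
    IsStrongAlliance G S ↔ S.Nonempty ∧ ∀ v ∈ S, ∃ w ∈ S, G.Adj v w := by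
  refine and_congr_right fun _ => forall₂_congr fun v _ => ?_
  rw [hG, degIn, show ∀ c : ℕ, 2 ≤ 2 * c ↔ 0 < c by omega,
    Set.ncard_pos (S.finite_toSet.inter_of_left _)]
  simp [Set.Nonempty]

theorem isCountedAlliance_iff_of_degOf_eq_two (hG : ∀ v, degOf G v = 2) (S : Finset V) :
    IsCountedAlliance G S ↔ 2 ≤ S.card ∧ (G.induce (S : Set V)).Connected := by
  rw [IsCountedAlliance, isStrongAlliance_iff_of_degOf_eq_two hG]
  constructor
  · rintro ⟨⟨hne, hadj⟩, hconn⟩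
    refine ⟨?_, hconn⟩
    by_contra! hlt
    have hS1 : S.card = 1 := by have := hne.card_pos; omega
    obtain ⟨v, rfl⟩ := Finset.card_eq_one.mp hS1
    obtain ⟨w, hw, hvw⟩ := hadj v (Finset.mem_singleton_self v)
    exact hvw.ne (Finset.mem_singleton.mp hw).symm
  · rintro ⟨hcard, hconn⟩
    have : Nontrivial (S : Set V) := (Finset.one_lt_card_iff_nontrivial.mp hcard).coe_sort
    refine ⟨⟨hconn.nonempty.elim fun v => ⟨v, v.2⟩, fun v hv => ?_⟩, hconn⟩
    obtain ⟨w, hvw⟩ := not_forall_not.mp (hconn.preconnected.not_isIsolated ⟨v, hv⟩)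
    exact ⟨w, w.2, hvw⟩

theorem aCoeff_eq_zero_of_lt_two (hG : ∀ v, degOf G v = 2) {k : ℕ} (hk : k < 2) :
    aCoeff G k = 0 := by
  simp only [aCoeff, isCountedAlliance_iff_of_degOf_eq_two hG]
  convert Set.ncard_empty (Finset V)
  exact Set.eq_empty_of_forall_notMem fun S ⟨hS, h2, _⟩ => by omega

theorem aCoeff_of_two_le (hG : ∀ v, degOf G v = 2) {k : ℕ} (hk : 2 ≤ k) :
    aCoeff G k = {S : Finset V | S.card = k ∧ (G.induce (S : Set V)).Connected}.ncard := by
  simp only [aCoeff, isCountedAlliance_iff_of_degOf_eq_two hG]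
  congr! 3 with S
  constructor
  · exact fun ⟨hS, _, hconn⟩ => ⟨hS, hconn⟩
  · exact fun ⟨hS, hconn⟩ => ⟨hS, hS ▸ hk, hconn⟩

end TwoRegular

open Fin.NatCast Fin.CommRing

section Cycle

variable {m : ℕ}

theorem degOf_cycleGraph (v : Fin (m + 3)) : degOf (cycleGraph (m + 3)) v = 2 := by
  rw [degOf, ← cycleGraph_degree_three_le (v := v), ← card_neighborSet_eq_degree,
    Set.ncard_eq_toFinset_card', Set.toFinset_card]

theorem cycleGraph_adj_iff {u v : Fin (m + 3)} :
    (cycleGraph (m + 3)).Adj u v ↔ v = u + 1 ∨ v = u - 1 := by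
  rw [← mem_neighborSet, cycleGraph_neighborSet, Set.mem_insert_iff, Set.mem_singleton_iff, or_comm]

def cycleArc (j : Fin (m + 3)) (k : ℕ) : Finset (Fin (m + 3)) :=
  (Finset.range k).image fun i : ℕ => j + (i : Fin (m + 3))

variable {j : Fin (m + 3)} {k : ℕ}

theorem mem_cycleArc {v : Fin (m + 3)} : v ∈ cycleArc j k ↔ ∃ i < k, j + i = v := by
  simp [cycleArc]

theorem add_mem_cycleArc {i : ℕ} (hi : i < k) : j + i ∈ cycleArc j k :=
  mem_cycleArc.mpr ⟨i, hi, rfl⟩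

theorem self_mem_cycleArc (hk : 0 < k) : j ∈ cycleArc j k := by
  simpa using add_mem_cycleArc (j := j) hk

theorem card_cycleArc (hk : k ≤ m + 3) : (cycleArc j k).card = k := by
  rw [cycleArc, Finset.card_image_of_injOn, Finset.card_range]
  intro a ha b hb hab
  exact CharP.natCast_injOn_Iio (Fin (m + 3)) (m + 3)
    (lt_of_lt_of_le (Finset.mem_range.mp ha) hk) (lt_of_lt_of_le (Finset.mem_range.mp hb) hk)
    (add_left_cancel hab)

theorem sub_one_notMem_cycleArc (hk : k ≤ m + 2) : j - 1 ∉ cycleArc j k := by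
  intro h
  obtain ⟨i, hi, hji⟩ := mem_cycleArc.mp h
  have : ((i + 1 : ℕ) : Fin (m + 3)) = 0 := by
    push_cast; linear_combination hji
  exact absurd (Nat.le_of_dvd (Nat.succ_pos i) (Fin.natCast_eq_zero.mp this)) (by omega)

theorem cycleArc_injective (hk0 : 0 < k) (hk : k ≤ m + 2) :
    Function.Injective fun j : Fin (m + 3) => cycleArc j k := by
  intro j j' (h : cycleArc j k = cycleArc j' k)
  obtain ⟨i, hi, hji⟩ := mem_cycleArc.mp (h ▸ self_mem_cycleArc hk0)
  rcases i with _ | i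
  · simpa using hji.symm
  · refine absurd ?_ (sub_one_notMem_cycleArc (j := j) hk)
    rw [h, ← hji]
    convert add_mem_cycleArc (j := j') (k := k) (i := i) (by omega) using 1
    push_cast
    ring

theorem cycleArc_connected (hk : 0 < k) :
    ((cycleGraph (m + 3)).induce (cycleArc j k : Set (Fin (m + 3)))).Connected := by
  rw [connected_iff_exists_forall_reachable]
  refine ⟨⟨j, self_mem_cycleArc hk⟩, ?_⟩
  suffices ∀ i (hi : i < k),
      ((cycleGraph (m + 3)).induce (cycleArc j k : Set (Fin (m + 3)))).Reachable
        ⟨j, self_mem_cycleArc hk⟩ ⟨j + i, add_mem_cycleArc hi⟩ by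
    rintro ⟨v, hv⟩
    obtain ⟨i, hi, rfl⟩ := mem_cycleArc.mp hv
    exact this i hi
  intro i hi
  induction i with
  | zero => simp
  | succ i ih =>
    refine (ih (by omega)).trans (Adj.reachable ?_)
    simp [cycleGraph_adj_iff, add_assoc]

theorem mem_cycleArc_of_adj {S : Finset (Fin (m + 3))} (hj : j - 1 ∉ S)
    (hk : j + (k : Fin (m + 3)) ∉ S) {x y : Fin (m + 3)} (hx : x ∈ cycleArc j k) (hy : y ∈ S)
    (hxy : (cycleGraph (m + 3)).Adj x y) :
    y ∈ cycleArc j k := by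
  obtain ⟨i, hi, rfl⟩ := mem_cycleArc.mp hx
  rcases cycleGraph_adj_iff.mp hxy with rfl | rfl
  · have hik : i + 1 ≠ k := by
      intro h
      exact hk (by simpa [← h, add_assoc] using hy)
    simpa [add_assoc] using add_mem_cycleArc (j := j) (show i + 1 < k by omega)
  · rcases i with _ | i
    · exact absurd (by simpa using hy) hj
    · rw [Nat.cast_succ, ← add_assoc, add_sub_cancel_right]
      exact add_mem_cycleArc (by omega)

theorem Fin.exists_mem_sub_one_notMem {n : ℕ} [NeZero n] {S : Finset (Fin n)} (hS : S.Nonempty)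
    (hne : S ≠ Finset.univ) : ∃ j ∈ S, j - 1 ∉ S := by
  by_contra! h
  obtain ⟨s, hs⟩ := hS
  have hsub : ∀ i : ℕ, s - i ∈ S := by
    intro i
    induction i with
    | zero => simpa using hs
    | succ i ih => simpa [sub_sub] using h _ ih
  exact hne (Finset.eq_univ_of_forall fun x => by simpa using hsub (s - x).val)

theorem eq_cycleArc_of_induce_connected {S : Finset (Fin (m + 3))}
    (hconn : ((cycleGraph (m + 3)).induce (S : Set (Fin (m + 3)))).Connected)
    (hne : S ≠ Finset.univ) : ∃ j, S = cycleArc j S.card := by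
  classical
  obtain ⟨j, hjS, hj⟩ :=
    Fin.exists_mem_sub_one_notMem (hconn.nonempty.elim fun v => ⟨v, v.2⟩) hne
  obtain ⟨v, hv⟩ : ∃ v, v ∉ S := by
    by_contra! h
    exact hne (Finset.eq_univ_of_forall h)
  have hv' : j + ((v - j).val : Fin (m + 3)) ∉ S := by simpa using hv
  have hexit : ∃ t : ℕ, j + (t : Fin (m + 3)) ∉ S := ⟨_, hv'⟩
  set T := Nat.find hexit
  have hT : j + (T : Fin (m + 3)) ∉ S := Nat.find_spec hexit
  have hTpos : 0 < T := Nat.pos_of_ne_zero fun h0 => hT (by simpa [h0] using hjS)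
  have hTle : T ≤ m + 3 := (Nat.find_min' hexit hv').trans (v - j).isLt.le
  have hsub : cycleArc j T ⊆ S := fun x hx => by
    obtain ⟨i, hi, rfl⟩ := mem_cycleArc.mp hx
    exact not_not.mp (Nat.find_min hexit hi)
  have hsup : (S : Set (Fin (m + 3))) ⊆ cycleArc j T :=
    hconn.preconnected.subset_of_adj_closed hjS (self_mem_cycleArc hTpos)
      fun _ hx _ hy hxy => mem_cycleArc_of_adj hj hT hx hy hxy
  have hST : S = cycleArc j T := (Finset.coe_subset.mp hsup).antisymm hsub
  exact ⟨j, by rw [hST, card_cycleArc hTle]⟩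

theorem aCoeff_cycleGraph_of_two_le {k : ℕ} (h2 : 2 ≤ k) (hk : k ≤ m + 2) :
    aCoeff (cycleGraph (m + 3)) k = m + 3 := by
  rw [aCoeff_of_two_le degOf_cycleGraph h2]
  have hrange : {S : Finset (Fin (m + 3)) | S.card = k ∧
      ((cycleGraph (m + 3)).induce (S : Set (Fin (m + 3)))).Connected} =
      Set.range fun j => cycleArc j k := by
    ext S
    constructor
    · rintro ⟨hcard, hconn⟩
      have hne : S ≠ Finset.univ := by
        rintro rfl
        simp at hcard
        omega
      obtain ⟨j, hj⟩ := eq_cycleArc_of_induce_connected hconn hne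
      exact ⟨j, by rw [hj, hcard]⟩
    · rintro ⟨j, rfl⟩
      exact ⟨card_cycleArc (by omega), cycleArc_connected (by omega)⟩
  rw [hrange, Set.ncard_range_of_injective (cycleArc_injective (by omega) hk),
    Nat.card_eq_fintype_card, Fintype.card_fin]

theorem aCoeff_cycleGraph_self : aCoeff (cycleGraph (m + 3)) (m + 3) = 1 := by
  rw [aCoeff_of_two_le degOf_cycleGraph (by omega)]
  have huniv : cycleArc 0 (m + 3) = Finset.univ :=
    Finset.eq_univ_of_card _ (by rw [card_cycleArc le_rfl, Fintype.card_fin])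
  have hsingleton : {S : Finset (Fin (m + 3)) | S.card = m + 3 ∧
      ((cycleGraph (m + 3)).induce (S : Set (Fin (m + 3)))).Connected} = {Finset.univ} := by
    ext S
    simp only [Set.mem_ofPred_eq, Set.mem_singleton_iff]
    constructor
    · rintro ⟨hcard, -⟩
      exact Finset.eq_univ_of_card S (by simpa using hcard)
    · rintro rfl
      exact ⟨by simp, huniv ▸ cycleArc_connected (by omega)⟩
  rw [hsingleton, Set.ncard_singleton]

end Cycle

/-- For the cycle graph `C_n` on `n ≥ 3` vertices: `a_1(C_n) = 0`,
`a_k(C_n) = n` for `2 ≤ k ≤ n − 1`, `a_n(C_n) = 1`, and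
`a(C_n;x) = n·Σ_{i=2}^{n−1} x^i + x^n`. -/
theorem stmt_9 (n : ℕ) (hn : 3 ≤ n) :
    aCoeff (SimpleGraph.cycleGraph n) 1 = 0 ∧
    (∀ k : ℕ, 2 ≤ k → k ≤ n - 1 → aCoeff (SimpleGraph.cycleGraph n) k = n) ∧
    aCoeff (SimpleGraph.cycleGraph n) n = 1 ∧
    alliancePoly (SimpleGraph.cycleGraph n) =
      Polynomial.C (n : ℤ) * ∑ i ∈ Finset.Icc 2 (n - 1), Polynomial.X ^ i
        + Polynomial.X ^ n := by
  obtain ⟨m, rfl⟩ : ∃ m, n = m + 3 := ⟨n - 3, by omega⟩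
  have hmid : ∀ k, 2 ≤ k → k ≤ m + 2 → aCoeff (cycleGraph (m + 3)) k = m + 3 :=
    fun _ => aCoeff_cycleGraph_of_two_le
  refine ⟨aCoeff_eq_zero_of_lt_two degOf_cycleGraph (by omega), hmid, aCoeff_cycleGraph_self, ?_⟩
  have hlow : ∑ k ∈ Finset.range 2, C (aCoeff (cycleGraph (m + 3)) k : ℤ) * X ^ k = 0 :=
    Finset.sum_eq_zero fun k hk => by
      rw [aCoeff_eq_zero_of_lt_two degOf_cycleGraph (Finset.mem_range.mp hk)]
      simp
  rw [alliancePoly, Fintype.card_fin, Finset.sum_range_succ, aCoeff_cycleGraph_self,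
    ← Finset.sum_range_add_sum_Ico _ (show 2 ≤ m + 3 by omega), hlow, zero_add,
    show m + 3 - 1 = m + 2 from rfl, ← Finset.Ico_add_one_right_eq_Icc, Finset.mul_sum]
  refine congrArg₂ _ (Finset.sum_congr rfl fun k hk => ?_) (by simp)
  rw [hmid k (Finset.mem_Ico.mp hk).1 (Nat.le_of_lt_succ (Finset.mem_Ico.mp hk).2)]
end

section
/- For the complete graph K_n on n ≥ 1 vertices, a nonempty set S of vertices is a strong defensive alliance (necessarily with connected induced subgraph) if and only if |S| ≥ ⌈(n+1)/2⌉. Consequently a_k(K_n) = C(n, k) for ⌈(n+1)/2⌉ ≤ k ≤ n and a_k(K_n) = 0 for 1 ≤ k < ⌈(n+1)/2⌉; that is, a(K_n; x) = Σ_{k=⌈(n+1)/2⌉}^{n} C(n,k) x^k. -/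
open SimpleGraph Polynomial Finset

/-! In `K_n` every vertex has degree `n - 1` and a vertex of `S` has `|S| - 1` neighbours in `S`,
so the alliance condition reads `n - 1 ≤ 2 (|S| - 1)`, i.e. `|S| ≥ ⌈(n+1)/2⌉`, and the induced
subgraph, being complete, is connected. Hence the counted alliances of size `k` are either all
`k`-subsets or none of them. -/

section CompleteGraph

variable {V : Type*}

lemma degOf_top [Fintype V] (v : V) : degOf (⊤ : SimpleGraph V) v = Fintype.card V - 1 := by
  rw [degOf, neighborSet_top, Set.ncard_compl, Set.ncard_singleton, Nat.card_eq_fintype_card]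

lemma degIn_top_of_mem [DecidableEq V] {S : Finset V} {v : V} (hv : v ∈ S) :
    degIn (⊤ : SimpleGraph V) S v = #S - 1 := by
  rw [degIn, neighborSet_top, ← Set.sdiff_eq, ← coe_erase, Set.ncard_coe_finset,
    card_erase_of_mem hv]

lemma induce_top_connected {S : Finset V} (hS : S.Nonempty) :
    ((⊤ : SimpleGraph V).induce (S : Set V)).Connected := by
  have : Nonempty (S : Set V) := hS.coe_sort
  simp

variable [Fintype V]

lemma isCountedAlliance_top_iff {S : Finset V} :
    IsCountedAlliance (⊤ : SimpleGraph V) S ↔ (Fintype.card V + 2) / 2 ≤ #S := by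
  classical
  by_cases hS : S.Nonempty
  · have hpos := hS.card_pos
    refine ⟨fun ⟨⟨_, h⟩, _⟩ => ?_, fun h => ⟨⟨hS, fun v hv => ?_⟩, induce_top_connected hS⟩⟩
    · obtain ⟨v, hv⟩ := hS
      have := h v hv
      rw [degOf_top, degIn_top_of_mem hv] at this
      omega
    · rw [degOf_top, degIn_top_of_mem hv]
      omega
  · rw [not_nonempty_iff_eq_empty.mp hS, card_empty]
    exact iff_of_false (fun h => not_nonempty_empty h.1.1) (by omega)

lemma aCoeff_top (k : ℕ) :
    aCoeff (⊤ : SimpleGraph V) k =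
      if (Fintype.card V + 2) / 2 ≤ k then (Fintype.card V).choose k else 0 := by
  simp_rw [aCoeff, isCountedAlliance_top_iff]
  split_ifs with hk
  · have hset : {S : Finset V | #S = k ∧ (Fintype.card V + 2) / 2 ≤ #S} =
        (univ.powersetCard k : Finset (Finset V)) := by
      ext S
      simp only [Set.mem_ofPred_eq, mem_coe, mem_powersetCard_univ]
      exact ⟨And.left, fun h => ⟨h, h ▸ hk⟩⟩
    rw [hset, Set.ncard_coe_finset, card_powersetCard, card_univ]
  · convert Set.ncard_empty (Finset V)
    ext S
    simp only [Set.mem_ofPred_eq, Set.mem_empty_iff_false, iff_false, not_and]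
    exact fun h => h ▸ hk

lemma alliancePoly_top :
    alliancePoly (⊤ : SimpleGraph V) = ∑ k ∈ Icc ((Fintype.card V + 2) / 2) (Fintype.card V),
      C (((Fintype.card V).choose k : ℕ) : ℤ) * X ^ k := by
  have hIcc : Icc ((Fintype.card V + 2) / 2) (Fintype.card V) =
      {k ∈ range (Fintype.card V + 1) | (Fintype.card V + 2) / 2 ≤ k} := by
    ext k
    simp only [mem_Icc, mem_filter, mem_range]
    omega
  rw [alliancePoly, hIcc, sum_filter]
  refine sum_congr rfl fun k _ => ?_
  rw [aCoeff_top]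
  split_ifs <;> simp

end CompleteGraph

theorem stmt_10_general (n : ℕ) :
    (∀ S : Finset (Fin n), S.Nonempty →
      (IsCountedAlliance (⊤ : SimpleGraph (Fin n)) S ↔ (n + 2) / 2 ≤ S.card)) ∧
    (∀ k : ℕ, (n + 2) / 2 ≤ k → k ≤ n →
      aCoeff (⊤ : SimpleGraph (Fin n)) k = n.choose k) ∧
    (∀ k : ℕ, 1 ≤ k → k < (n + 2) / 2 → aCoeff (⊤ : SimpleGraph (Fin n)) k = 0) ∧
    alliancePoly (⊤ : SimpleGraph (Fin n)) =
      ∑ k ∈ Finset.Icc ((n + 2) / 2) n, Polynomial.C ((n.choose k : ℕ) : ℤ)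
        * Polynomial.X ^ k := by
  have hcard : Fintype.card (Fin n) = n := Fintype.card_fin n
  refine ⟨fun S _ => ?_, fun k hk _ => ?_, fun k _ hk => ?_, ?_⟩
  · rw [isCountedAlliance_top_iff, hcard]
  · rw [aCoeff_top, hcard, if_pos hk]
  · rw [aCoeff_top, hcard, if_neg (not_le.mpr hk)]
  · rw [alliancePoly_top, hcard]

/-- In the complete graph `K_n` (`n ≥ 1`), a nonempty vertex set `S` is a
strong defensive alliance (with connected induced subgraph) iff `|S| ≥ ⌈(n+1)/2⌉`; hence
`a_k(K_n) = C(n,k)` for `⌈(n+1)/2⌉ ≤ k ≤ n`, `a_k(K_n) = 0` for `1 ≤ k < ⌈(n+1)/2⌉`, and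
`a(K_n;x) = Σ_{k=⌈(n+1)/2⌉}^n C(n,k) x^k`.  (Here `⌈(n+1)/2⌉ = (n+2)/2` in ℕ-division.) -/
theorem stmt_10 (n : ℕ) (hn : 1 ≤ n) :
    (∀ S : Finset (Fin n), S.Nonempty →
      (IsCountedAlliance (⊤ : SimpleGraph (Fin n)) S ↔ (n + 2) / 2 ≤ S.card)) ∧
    (∀ k : ℕ, (n + 2) / 2 ≤ k → k ≤ n →
      aCoeff (⊤ : SimpleGraph (Fin n)) k = n.choose k) ∧
    (∀ k : ℕ, 1 ≤ k → k < (n + 2) / 2 → aCoeff (⊤ : SimpleGraph (Fin n)) k = 0) ∧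
    alliancePoly (⊤ : SimpleGraph (Fin n)) =
      ∑ k ∈ Finset.Icc ((n + 2) / 2) n, Polynomial.C ((n.choose k : ℕ) : ℤ)
        * Polynomial.X ^ k :=
  stmt_10_general n
end

section
/- In the complete bipartite graph K_{n,m} (n, m ≥ 1) with parts N and M of sizes n and m, a nonempty set S of vertices is a strong defensive alliance with connected induced subgraph if and only if |S ∩ N| ≥ ⌈n/2⌉ and |S ∩ M| ≥ ⌈m/2⌉. Consequently, for every k, a_k(K_{n,m}) = Σ_{i=⌈m/2⌉}^{k−⌈n/2⌉} C(m,i)·C(n,k−i), and a(K_{n,m}; x) = (Σ_{i=⌈n/2⌉}^{n} C(n,i) x^i)·(Σ_{j=⌈m/2⌉}^{m} C(m,j) x^j). -/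
/-!
In `K_{α,β}` a left vertex has degree `|β|` and exactly `|S ∩ β|` neighbours in `S`, so the
alliance condition says `|β| ≤ 2|S ∩ β|` as soon as `S` meets `α`, and symmetrically. When both
parts are nonempty this forces a nonempty alliance to meet both sides, which in turn makes `⟨S⟩`
connected. Counted alliances thus correspond, via `S ↦ (S ∩ α, S ∩ β)`, to pairs of subsets of
sizes at least `⌈|α|/2⌉` and `⌈|β|/2⌉`, and the alliance polynomial is the product of the two
binomial tails.
-/

open SimpleGraph Polynomial Finset

lemma degIn_univ {V : Type*} [Fintype V] (G : SimpleGraph V) (v : V) :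
    degIn G univ v = degOf G v := by
  rw [degIn, coe_univ, Set.univ_inter, degOf]

lemma aCoeff_eq_zero_of_card_lt {V : Type*} [Fintype V] (G : SimpleGraph V) {k : ℕ}
    (hk : Fintype.card V < k) : aCoeff G k = 0 := by
  rw [aCoeff, Set.ncard_eq_zero]
  ext S
  simp only [Set.mem_ofPred_eq, Set.mem_empty_iff_false, iff_false, not_and]
  rintro rfl
  exact absurd (card_le_univ S) (by omega)

lemma coeff_alliancePoly {V : Type*} [Fintype V] (G : SimpleGraph V) (k : ℕ) :
    (alliancePoly G).coeff k = aCoeff G k := by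
  simp only [alliancePoly, finsetSum_coeff, coeff_C_mul_X_pow]
  rw [sum_ite_eq]
  split_ifs with hk
  · rfl
  · rw [aCoeff_eq_zero_of_card_lt G (by simpa using hk), Nat.cast_zero]

section CompleteBipartite

variable {α β : Type*}

open Sum

lemma card_filter_isLeft (S : Finset (α ⊕ β)) : #(S.filter fun x => x.isLeft) = #S.toLeft := by
  rw [show S.filter (fun x => x.isLeft) = S.toLeft.map .inl by ext (x | x) <;> simp, card_map]

lemma card_filter_isRight (S : Finset (α ⊕ β)) :
    #(S.filter fun x => x.isRight) = #S.toRight := by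
  rw [show S.filter (fun x => x.isRight) = S.toRight.map .inr by ext (x | x) <;> simp, card_map]

lemma inter_neighborSet_inl (S : Finset (α ⊕ β)) (a : α) :
    (S : Set (α ⊕ β)) ∩ (completeBipartiteGraph α β).neighborSet (inl a) =
      (S.toRight.map .inr : Finset (α ⊕ β)) := by
  ext (x | x) <;> simp [mem_neighborSet]

lemma inter_neighborSet_inr (S : Finset (α ⊕ β)) (b : β) :
    (S : Set (α ⊕ β)) ∩ (completeBipartiteGraph α β).neighborSet (inr b) =
      (S.toLeft.map .inl : Finset (α ⊕ β)) := by
  ext (x | x) <;> simp [mem_neighborSet]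

lemma degIn_completeBipartiteGraph_inl (S : Finset (α ⊕ β)) (a : α) :
    degIn (completeBipartiteGraph α β) S (inl a) = #S.toRight := by
  rw [degIn, inter_neighborSet_inl, Set.ncard_coe_finset, card_map]

lemma degIn_completeBipartiteGraph_inr (S : Finset (α ⊕ β)) (b : β) :
    degIn (completeBipartiteGraph α β) S (inr b) = #S.toLeft := by
  rw [degIn, inter_neighborSet_inr, Set.ncard_coe_finset, card_map]

lemma connected_induce_completeBipartiteGraph {S : Finset (α ⊕ β)} (hl : S.toLeft.Nonempty)
    (hr : S.toRight.Nonempty) :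
    ((completeBipartiteGraph α β).induce (S : Set (α ⊕ β))).Connected := by
  obtain ⟨a, ha⟩ := hl
  obtain ⟨b, hb⟩ := hr
  rw [mem_toLeft] at ha
  rw [mem_toRight] at hb
  have adj_a : ∀ (y : β) (hy : inr y ∈ S),
      ((completeBipartiteGraph α β).induce (S : Set (α ⊕ β))).Adj ⟨inl a, ha⟩ ⟨inr y, hy⟩ := by
    simp
  refine (connected_iff_exists_forall_reachable _).2 ⟨⟨inl a, ha⟩, ?_⟩
  rintro ⟨x | y, hv⟩
  · exact (adj_a b hb).reachable.trans (Adj.reachable (by simp))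
  · exact (adj_a y hv).reachable

variable [Fintype α] [Fintype β]

lemma degOf_completeBipartiteGraph_inl (a : α) :
    degOf (completeBipartiteGraph α β) (inl a) = Fintype.card β := by
  rw [← degIn_univ, degIn_completeBipartiteGraph_inl, toRight_univ, card_univ]

lemma degOf_completeBipartiteGraph_inr (b : β) :
    degOf (completeBipartiteGraph α β) (inr b) = Fintype.card α := by
  rw [← degIn_univ, degIn_completeBipartiteGraph_inr, toLeft_univ, card_univ]

lemma forall_degOf_le_two_mul_degIn_completeBipartiteGraph_iff (S : Finset (α ⊕ β)) :
    (∀ v ∈ S, degOf (completeBipartiteGraph α β) v ≤ 2 * degIn (completeBipartiteGraph α β) S v) ↔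
      (S.toLeft.Nonempty → Fintype.card β ≤ 2 * #S.toRight) ∧
        (S.toRight.Nonempty → Fintype.card α ≤ 2 * #S.toLeft) := by
  simp [Sum.forall, degOf_completeBipartiteGraph_inl, degOf_completeBipartiteGraph_inr,
    degIn_completeBipartiteGraph_inl, degIn_completeBipartiteGraph_inr, Finset.Nonempty]

lemma isCountedAlliance_completeBipartiteGraph_iff [Nonempty α] [Nonempty β]
    (S : Finset (α ⊕ β)) :
    IsCountedAlliance (completeBipartiteGraph α β) S ↔
      (Fintype.card α + 1) / 2 ≤ #S.toLeft ∧ (Fintype.card β + 1) / 2 ≤ #S.toRight := by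
  have hα := Fintype.card_pos (α := α)
  have hβ := Fintype.card_pos (α := β)
  have hS : S.Nonempty ↔ S.toLeft.Nonempty ∨ S.toRight.Nonempty := by
    rw [← card_pos, ← card_pos, ← card_pos, ← card_toLeft_add_card_toRight]
    omega
  simp only [IsCountedAlliance, IsStrongAlliance,
    forall_degOf_le_two_mul_degIn_completeBipartiteGraph_iff, hS, ← card_pos]
  constructor
  · rintro ⟨⟨hne, hl, hr⟩, -⟩
    omega
  · rintro ⟨hl, hr⟩
    refine ⟨⟨by omega, fun _ => by omega, fun _ => by omega⟩, ?_⟩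
    exact connected_induce_completeBipartiteGraph (card_pos.1 (by omega)) (card_pos.1 (by omega))

lemma aCoeff_completeBipartiteGraph [Nonempty α] [Nonempty β] (k : ℕ) :
    aCoeff (completeBipartiteGraph α β) k =
      #{p : Finset α × Finset β | #p.1 + #p.2 = k ∧
        (Fintype.card α + 1) / 2 ≤ #p.1 ∧ (Fintype.card β + 1) / 2 ≤ #p.2} := by
  classical
  rw [aCoeff, ← Nat.card_coe_set_eq, ← Fintype.card_subtype, ← Nat.card_eq_fintype_card]
  refine Nat.card_congr (Finset.sumEquiv.toEquiv.subtypeEquiv fun S => ?_)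
  simp [isCountedAlliance_completeBipartiteGraph_iff, card_toLeft_add_card_toRight]

end CompleteBipartite

/-- The hypothesis `0 < b` keeps `Icc b (k - a)` empty when `k < a`, where `k - a` truncates
to `0`. -/
lemma card_filter_card_add_card_eq_sum {α β : Type*} [Fintype α] [Fintype β] {a b : ℕ}
    (hb : 0 < b) (k : ℕ) :
    #{p : Finset α × Finset β | #p.1 + #p.2 = k ∧ a ≤ #p.1 ∧ b ≤ #p.2} =
      ∑ i ∈ Icc b (k - a), (Fintype.card β).choose i * (Fintype.card α).choose (k - i) := by
  set s : Finset (Finset α × Finset β) := {p | #p.1 + #p.2 = k ∧ a ≤ #p.1 ∧ b ≤ #p.2}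
  have hs : ∀ p, p ∈ s ↔ #p.1 + #p.2 = k ∧ a ≤ #p.1 ∧ b ≤ #p.2 := by simp [s]
  rw [card_eq_sum_card_fiberwise (f := fun p => #p.2) (t := Icc b (k - a))
    (fun p hp => by rw [mem_coe, hs] at hp; simp only [mem_coe, mem_Icc]; omega)]
  refine sum_congr rfl fun i hi => ?_
  rw [mem_Icc] at hi
  have hfiber : {p ∈ s | #p.2 = i} = powersetCard (k - i) univ ×ˢ powersetCard i univ := by
    ext p
    simp only [mem_filter, hs, mem_product, mem_powersetCard_univ]
    omega
  rw [hfiber, card_product, card_powersetCard, card_powersetCard, card_univ, card_univ,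
    mul_comm]

section BinomialTail

variable {R : Type*} [CommSemiring R]

lemma coeff_sum_Icc_choose_mul_X_pow (c N d : ℕ) :
    (∑ i ∈ Icc c N, C (N.choose i : R) * X ^ i).coeff d =
      if c ≤ d then (N.choose d : R) else 0 := by
  simp only [finsetSum_coeff, coeff_C_mul_X_pow]
  rw [sum_ite_eq]
  by_cases hd : d ≤ N
  · simp [hd]
  · simp [hd, Nat.choose_eq_zero_of_lt (not_le.1 hd)]

lemma coeff_mul_sum_Icc_choose_mul_X_pow {a b : ℕ} (hb : 0 < b) (N M k : ℕ) :
    ((∑ i ∈ Icc b M, C (M.choose i : R) * X ^ i) *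
        (∑ i ∈ Icc a N, C (N.choose i : R) * X ^ i)).coeff k =
      ∑ i ∈ Icc b (k - a), (M.choose i * N.choose (k - i) : R) := by
  rw [coeff_mul, Nat.sum_antidiagonal_eq_sum_range_succ_mk]
  simp only [coeff_sum_Icc_choose_mul_X_pow, ite_zero_mul_ite_zero, ← sum_filter]
  congr 1
  ext i
  simp only [mem_filter, mem_range, mem_Icc]
  omega

end BinomialTail

/-- In the complete bipartite graph `K_{n,m}` (`n, m ≥ 1`) with parts `N`
(left, size `n`) and `M` (right, size `m`), a nonempty set `S` is a strong defensive
alliance with connected induced subgraph iff `|S ∩ N| ≥ ⌈n/2⌉` and `|S ∩ M| ≥ ⌈m/2⌉`.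
Consequently `a_k(K_{n,m}) = Σ_{i=⌈m/2⌉}^{k−⌈n/2⌉} C(m,i)·C(n,k−i)` and
`a(K_{n,m};x) = (Σ_{i=⌈n/2⌉}^n C(n,i) x^i)·(Σ_{j=⌈m/2⌉}^m C(m,j) x^j)`.
(Here `⌈n/2⌉ = (n+1)/2` in ℕ-division.) -/
theorem stmt_12 (n m : ℕ) (hn : 1 ≤ n) (hm : 1 ≤ m) :
    (∀ S : Finset (Fin n ⊕ Fin m), S.Nonempty →
      (IsCountedAlliance (completeBipartiteGraph (Fin n) (Fin m)) S ↔
        (n + 1) / 2 ≤ (S.filter (fun x => x.isLeft)).card ∧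
          (m + 1) / 2 ≤ (S.filter (fun x => x.isRight)).card)) ∧
    (∀ k : ℕ, aCoeff (completeBipartiteGraph (Fin n) (Fin m)) k =
      ∑ i ∈ Finset.Icc ((m + 1) / 2) (k - (n + 1) / 2), m.choose i * n.choose (k - i)) ∧
    alliancePoly (completeBipartiteGraph (Fin n) (Fin m)) =
      (∑ i ∈ Finset.Icc ((n + 1) / 2) n, Polynomial.C ((n.choose i : ℕ) : ℤ)
          * Polynomial.X ^ i) *
      (∑ j ∈ Finset.Icc ((m + 1) / 2) m, Polynomial.C ((m.choose j : ℕ) : ℤ)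
          * Polynomial.X ^ j) := by
  have : Nonempty (Fin n) := ⟨⟨0, hn⟩⟩
  have : Nonempty (Fin m) := ⟨⟨0, hm⟩⟩
  have hcoeff (k : ℕ) : aCoeff (completeBipartiteGraph (Fin n) (Fin m)) k =
      ∑ i ∈ Icc ((m + 1) / 2) (k - (n + 1) / 2), m.choose i * n.choose (k - i) := by
    rw [aCoeff_completeBipartiteGraph, Fintype.card_fin, Fintype.card_fin,
      card_filter_card_add_card_eq_sum (by omega), Fintype.card_fin, Fintype.card_fin]
  refine ⟨fun S _ => ?_, hcoeff, ?_⟩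
  · rw [card_filter_isLeft, card_filter_isRight, isCountedAlliance_completeBipartiteGraph_iff,
      Fintype.card_fin, Fintype.card_fin]
  · ext k
    rw [coeff_alliancePoly, hcoeff, mul_comm, coeff_mul_sum_Icc_choose_mul_X_pow (by omega)]
    push_cast
    rfl
end

section
/- For r, t ≥ 3, the strong alliance polynomial of the double star graph S_{r,t} satisfies a(S_{r,t}; x) = a(S_r; x) + a(S_t; x) − C(r−1, (r−1)/2) x^{(r+1)/2} − C(t−1, (t−1)/2) x^{(t+1)/2} + (C(r−1, r/2 − 1) x^{r/2} + a(S_r; x)) · (C(t−1, t/2 − 1) x^{t/2} + a(S_t; x)), where a binomial coefficient C(z, y) is understood to be 0 whenever y is not an integer (so the third term vanishes when r is even, the fourth when t is even, and the extra factors vanish when r, respectively t, is odd). -/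
open SimpleGraph Polynomial Finset

/-- The star graph on `k + 1` vertices: the center is `none` and the `k` leaves are the
vertices `some i`. -/
def starOpt (k : ℕ) : SimpleGraph (Option (Fin k)) where
  Adj x y := (x = none ∧ y ≠ none) ∨ (y = none ∧ x ≠ none)
  symm := ⟨by tauto⟩
  loopless := ⟨by rintro x (⟨h1, h2⟩ | ⟨h1, h2⟩) <;> exact h2 h1⟩

/-- The double star graph `S_{r,t}` on `r + t` vertices: the disjoint union of the stars
`S_r` (on the left, center `Sum.inl none`) and `S_t` (on the right, center `Sum.inr none`)
together with the edge joining the two centers. -/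
def doubleStar (r t : ℕ) : SimpleGraph (Option (Fin (r - 1)) ⊕ Option (Fin (t - 1))) where
  Adj x y :=
    match x, y with
    | .inl a, .inl b => (starOpt (r - 1)).Adj a b
    | .inr a, .inr b => (starOpt (t - 1)).Adj a b
    | .inl a, .inr b => a = none ∧ b = none
    | .inr a, .inl b => a = none ∧ b = none
  symm := ⟨by
    rintro (a | a) (b | b) h
    · exact (starOpt _).adj_symm h
    · exact ⟨h.2, h.1⟩
    · exact ⟨h.2, h.1⟩
    · exact (starOpt _).adj_symm h⟩
  loopless := ⟨by rintro (a | a) h <;> exact (starOpt _).irrefl h⟩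

/-! ### Auxiliary lemmas -/

lemma degIn_eq_filter {V : Type*} (G : SimpleGraph V) [DecidableEq V] [DecidableRel G.Adj]
    (S : Finset V) (v : V) :
    degIn G S v = (S.filter (fun u => G.Adj v u)).card := by
  rw [degIn, ← Set.ncard_coe_finset]
  congr 1
  ext u
  simp [SimpleGraph.mem_neighborSet, and_comm]

lemma aCoeff_eq {V : Type*} [Fintype V] (G : SimpleGraph V)
    [DecidablePred (IsCountedAlliance G)] (k : ℕ) :
    aCoeff G k = (univ.filter (fun S : Finset V => S.card = k ∧ IsCountedAlliance G S)).card := by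
  classical
  rw [aCoeff, ← Set.ncard_coe_finset]
  congr 1
  ext S
  simp

lemma alliancePoly_eq_sum {V : Type*} [Fintype V] (G : SimpleGraph V)
    [DecidablePred (IsCountedAlliance G)] :
    alliancePoly G =
      ∑ S ∈ univ.filter (fun S : Finset V => IsCountedAlliance G S),
        (X : Polynomial ℤ) ^ S.card := by
  classical
  rw [alliancePoly,
    ← Finset.sum_fiberwise_of_maps_to (g := fun S : Finset V => S.card)
      (t := Finset.range (Fintype.card V + 1))
      (fun S _ => mem_range.2 (Nat.lt_succ_of_le (by simpa using Finset.card_le_univ S)))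
      (fun S => (X : Polynomial ℤ) ^ S.card)]
  refine Finset.sum_congr rfl fun k hk => ?_
  rw [aCoeff_eq]
  have h1 : (univ.filter (fun S : Finset V => S.card = k ∧ IsCountedAlliance G S))
      = ((univ.filter fun S : Finset V => IsCountedAlliance G S).filter fun S => S.card = k) := by
    rw [filter_filter]
    apply Finset.filter_congr
    intro S _
    tauto
  rw [h1, Finset.sum_congr rfl (fun S hS => by rw [(Finset.mem_filter.1 hS).2]),
    Finset.sum_const, nsmul_eq_mul]
  simp

lemma hub_connected {W : Type*} (G : SimpleGraph W) (c : W)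
    (h : ∀ w, w ≠ c → G.Adj c w) : G.Connected := by
  rw [SimpleGraph.connected_iff_exists_forall_reachable]
  refine ⟨c, fun w => ?_⟩
  rcases eq_or_ne w c with rfl | hw
  · exact SimpleGraph.Reachable.refl _
  · exact (h w hw).reachable

lemma ncard_ne_none (n : ℕ) : {y : Option (Fin n) | y ≠ none}.ncard = n := by
  have h : {y : Option (Fin n) | y ≠ none} = Set.range some := by
    ext y; cases y <;> simp
  rw [h, ← Set.image_univ, Set.ncard_image_of_injective _ (Option.some_injective _),
    Set.ncard_univ]
  simp

lemma myEraseNone_insertNone {α : Type*} (B : Finset α) :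
    Finset.eraseNone (Finset.insertNone B) = B := by
  ext a; simp

lemma myInsertNone_eraseNone {α : Type*} (A : Finset (Option α)) (h : none ∈ A) :
    Finset.insertNone (Finset.eraseNone A) = A := by
  ext o; cases o <;> simp [Finset.mem_insertNone, Finset.mem_eraseNone, h]

lemma myCard_eraseNone {α : Type*} (A : Finset (Option α)) (h : none ∈ A) :
    (Finset.eraseNone A).card = A.card - 1 := by
  have h2 := Finset.card_insertNone (Finset.eraseNone A)
  rw [myInsertNone_eraseNone A h] at h2
  omega

lemma card_star_sets (n m : ℕ) (hm : 1 ≤ m) :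
    ((univ : Finset (Finset (Option (Fin n)))).filter (fun A => none ∈ A ∧ A.card = m)).card
      = n.choose (m - 1) := by
  classical
  have hp := Finset.card_powersetCard (m - 1) (univ : Finset (Fin n))
  rw [Finset.card_fin] at hp
  rw [← hp]
  apply Finset.card_bij' (i := fun A _ => Finset.eraseNone A)
    (j := fun B _ => Finset.insertNone B)
  · intro A hA
    have h := (Finset.mem_filter.1 hA).2
    simp [Finset.mem_powersetCard, myCard_eraseNone A h.1, h.2]
  · intro B hB
    have h2 := (Finset.mem_powersetCard.1 hB).2
    simp only [Finset.mem_filter, Finset.mem_univ, true_and]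
    constructor
    · simp [Finset.mem_insertNone]
    · rw [Finset.card_insertNone, h2]; omega
  · intro A hA
    exact myInsertNone_eraseNone A (Finset.mem_filter.1 hA).2.1
  · intro B _
    exact myEraseNone_insertNone B

open scoped Classical in
noncomputable def starSum (n c : ℕ) : Polynomial ℤ :=
  ∑ A ∈ (univ : Finset (Finset (Option (Fin n)))).filter (fun A => none ∈ A ∧ c ≤ 2 * A.card),
    (X : Polynomial ℤ) ^ A.card

open scoped Classical in
lemma starSum_split (n c : ℕ) (hc : 2 ≤ c) :
    starSum n c
      = (if Even c then Polynomial.C ((n.choose (c / 2 - 1) : ℕ) : ℤ) * X ^ (c / 2) else 0)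
        + starSum n (c + 1) := by
  rw [starSum, starSum,
    ← Finset.sum_filter_add_sum_filter_not
      ((univ : Finset (Finset (Option (Fin n)))).filter (fun A => none ∈ A ∧ c ≤ 2 * A.card))
      (fun A => 2 * A.card = c)]
  congr 1
  · by_cases hce : Even c
    · rw [if_pos hce]
      obtain ⟨k, hk⟩ := hce
      have hfe : ((univ : Finset (Finset (Option (Fin n)))).filter
            (fun A => none ∈ A ∧ c ≤ 2 * A.card)).filter (fun A => 2 * A.card = c)
          = (univ : Finset (Finset (Option (Fin n)))).filter
            (fun A => none ∈ A ∧ A.card = c / 2) := by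
        rw [Finset.filter_filter]
        apply Finset.filter_congr
        intro A _
        constructor
        · rintro ⟨⟨ha, -⟩, h3⟩; exact ⟨ha, by omega⟩
        · rintro ⟨ha, h3⟩; exact ⟨⟨ha, by omega⟩, by omega⟩
      rw [hfe, Finset.sum_congr rfl (fun A hA => by
          rw [(Finset.mem_filter.1 hA).2.2]),
        Finset.sum_const, card_star_sets n (c / 2) (by omega), nsmul_eq_mul]
      simp
    · rw [if_neg hce]
      rw [Finset.filter_filter, Finset.filter_false_of_mem, Finset.sum_empty]
      rintro A - ⟨-, h2⟩
      exact hce ⟨A.card, by omega⟩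
  · congr 1
    rw [Finset.filter_filter]
    apply Finset.filter_congr
    intro A _
    constructor
    · rintro ⟨⟨h1, h2⟩, h3⟩; exact ⟨h1, by omega⟩
    · rintro ⟨h1, h2⟩; exact ⟨⟨h1, by omega⟩, by omega⟩

/-! ### Star graph lemmas -/

lemma degOf_star_none (n : ℕ) : degOf (starOpt n) none = n := by
  rw [degOf]
  have h : (starOpt n).neighborSet none = {y | y ≠ none} := by
    ext y; cases y <;> simp [starOpt, SimpleGraph.mem_neighborSet]
  rw [h, ncard_ne_none]

lemma degOf_star_some (n : ℕ) (i : Fin n) : degOf (starOpt n) (some i) = 1 := by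
  rw [degOf]
  have h : (starOpt n).neighborSet (some i) = {none} := by
    ext y; cases y <;> simp [starOpt, SimpleGraph.mem_neighborSet]
  rw [h, Set.ncard_singleton]

lemma degIn_star_none (n : ℕ) (S : Finset (Option (Fin n))) :
    degIn (starOpt n) S none = (S.erase none).card := by
  classical
  rw [degIn_eq_filter]
  congr 1
  ext u
  cases u <;> simp [starOpt]

lemma degIn_star_some (n : ℕ) (S : Finset (Option (Fin n))) (i : Fin n) :
    degIn (starOpt n) S (some i) = if none ∈ S then 1 else 0 := by
  classical
  rw [degIn_eq_filter]
  have h : S.filter (fun u => (starOpt n).Adj (some i) u) = S.filter (fun u => u = none) := by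
    apply filter_congr; intro u _; cases u <;> simp [starOpt]
  erw [h, Finset.filter_eq']
  split_ifs <;> simp

lemma star_counted_iff (n : ℕ) (S : Finset (Option (Fin n))) :
    IsCountedAlliance (starOpt n) S ↔ none ∈ S ∧ n + 2 ≤ 2 * S.card := by
  constructor
  · rintro ⟨⟨hne, hall⟩, -⟩
    have hnone : none ∈ S := by
      obtain ⟨v, hv⟩ := hne
      cases v with
      | none => exact hv
      | some i =>
        have h := hall _ hv
        rw [degOf_star_some, degIn_star_some] at h
        by_contra hn
        simp [hn] at h
    refine ⟨hnone, ?_⟩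
    have h := hall _ hnone
    rw [degOf_star_none, degIn_star_none] at h
    have hc := Finset.card_erase_of_mem hnone
    have h1 : 1 ≤ S.card := Finset.card_pos.2 ⟨_, hnone⟩
    omega
  · rintro ⟨h1, h2⟩
    refine ⟨⟨⟨none, h1⟩, ?_⟩, ?_⟩
    · intro v hv
      cases v with
      | none =>
        rw [degOf_star_none, degIn_star_none, Finset.card_erase_of_mem h1]; omega
      | some i =>
        rw [degOf_star_some, degIn_star_some, if_pos h1]; omega
    · apply hub_connected _ (⟨none, by simpa using h1⟩ : (S : Set (Option (Fin n))))
      rintro ⟨w, hw⟩ hwne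
      cases w with
      | none => exact absurd (Subtype.ext rfl) hwne
      | some i =>
        show (starOpt n).Adj none (some i)
        simp [starOpt]

open scoped Classical in
lemma alliancePoly_starOpt (n : ℕ) :
    alliancePoly (starOpt n) = starSum n (n + 2) := by
  rw [alliancePoly_eq_sum, starSum]
  refine Finset.sum_congr ?_ (fun _ _ => rfl)
  apply Finset.filter_congr
  intro S _
  exact star_counted_iff n S

/-! ### Double star lemmas -/

lemma filter_disjSum' {α β : Type*} (p : α ⊕ β → Prop) [DecidablePred p]
    (A : Finset α) (B : Finset β) :
    (A.disjSum B).filter p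
      = (A.filter (fun a => p (Sum.inl a))).disjSum (B.filter (fun b => p (Sum.inr b))) := by
  ext x; cases x <;> simp

lemma degOf_dbl_inl_none (r t : ℕ) (hr : 1 ≤ r) :
    degOf (doubleStar r t) (Sum.inl none) = r := by
  rw [degOf]
  have h : (doubleStar r t).neighborSet (Sum.inl none)
      = Sum.inl '' {y : Option (Fin (r - 1)) | y ≠ none} ∪ {Sum.inr none} := by
    ext u
    cases u with
    | inl a => cases a <;> simp [doubleStar, starOpt, SimpleGraph.mem_neighborSet]
    | inr b => cases b <;> simp [doubleStar, starOpt, SimpleGraph.mem_neighborSet]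
  rw [h, Set.ncard_union_eq (by simp) (Set.toFinite _) (Set.toFinite _),
    Set.ncard_image_of_injective _ Sum.inl_injective, ncard_ne_none, Set.ncard_singleton]
  omega

lemma degOf_dbl_inr_none (r t : ℕ) (ht : 1 ≤ t) :
    degOf (doubleStar r t) (Sum.inr none) = t := by
  rw [degOf]
  have h : (doubleStar r t).neighborSet (Sum.inr none)
      = Sum.inr '' {y : Option (Fin (t - 1)) | y ≠ none} ∪ {Sum.inl none} := by
    ext u
    cases u with
    | inl a => cases a <;> simp [doubleStar, starOpt, SimpleGraph.mem_neighborSet]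
    | inr b => cases b <;> simp [doubleStar, starOpt, SimpleGraph.mem_neighborSet]
  rw [h, Set.ncard_union_eq (by simp) (Set.toFinite _) (Set.toFinite _),
    Set.ncard_image_of_injective _ Sum.inr_injective, ncard_ne_none, Set.ncard_singleton]
  omega

lemma degOf_dbl_inl_some (r t : ℕ) (i : Fin (r - 1)) :
    degOf (doubleStar r t) (Sum.inl (some i)) = 1 := by
  rw [degOf]
  have h : (doubleStar r t).neighborSet (Sum.inl (some i)) = {Sum.inl none} := by
    ext u
    cases u with
    | inl a => cases a <;> simp [doubleStar, starOpt, SimpleGraph.mem_neighborSet]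
    | inr b => cases b <;> simp [doubleStar, starOpt, SimpleGraph.mem_neighborSet]
  rw [h, Set.ncard_singleton]

lemma degOf_dbl_inr_some (r t : ℕ) (j : Fin (t - 1)) :
    degOf (doubleStar r t) (Sum.inr (some j)) = 1 := by
  rw [degOf]
  have h : (doubleStar r t).neighborSet (Sum.inr (some j)) = {Sum.inr none} := by
    ext u
    cases u with
    | inl a => cases a <;> simp [doubleStar, starOpt, SimpleGraph.mem_neighborSet]
    | inr b => cases b <;> simp [doubleStar, starOpt, SimpleGraph.mem_neighborSet]
  rw [h, Set.ncard_singleton]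

lemma degIn_dbl_inl_none (r t : ℕ) (A : Finset (Option (Fin (r - 1))))
    (B : Finset (Option (Fin (t - 1)))) :
    degIn (doubleStar r t) (A.disjSum B) (Sum.inl none)
      = (A.erase none).card + (if none ∈ B then 1 else 0) := by
  classical
  rw [degIn_eq_filter, filter_disjSum', card_disjSum]
  congr 1
  · congr 1
    ext a
    cases a <;> simp [doubleStar, starOpt]
  · have h : B.filter (fun b => (doubleStar r t).Adj (Sum.inl none) (Sum.inr b))
        = B.filter (fun b => b = none) := by
      apply filter_congr; intro b _; simp [doubleStar]
    erw [h, Finset.filter_eq']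
    split_ifs <;> simp

lemma degIn_dbl_inr_none (r t : ℕ) (A : Finset (Option (Fin (r - 1))))
    (B : Finset (Option (Fin (t - 1)))) :
    degIn (doubleStar r t) (A.disjSum B) (Sum.inr none)
      = (B.erase none).card + (if none ∈ A then 1 else 0) := by
  classical
  rw [degIn_eq_filter, filter_disjSum', card_disjSum]
  rw [Nat.add_comm]
  congr 1
  · congr 1
    ext b
    cases b <;> simp [doubleStar, starOpt]
  · have h : A.filter (fun a => (doubleStar r t).Adj (Sum.inr none) (Sum.inl a))
        = A.filter (fun a => a = none) := by
      apply filter_congr; intro a _; simp [doubleStar]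
    erw [h, Finset.filter_eq']
    split_ifs <;> simp

lemma degIn_dbl_inl_some (r t : ℕ) (A : Finset (Option (Fin (r - 1))))
    (B : Finset (Option (Fin (t - 1)))) (i : Fin (r - 1)) :
    degIn (doubleStar r t) (A.disjSum B) (Sum.inl (some i))
      = if none ∈ A then 1 else 0 := by
  classical
  rw [degIn_eq_filter, filter_disjSum', card_disjSum]
  have h2 : B.filter (fun b => (doubleStar r t).Adj (Sum.inl (some i)) (Sum.inr b)) = ∅ := by
    apply Finset.filter_false_of_mem; intro b _; simp [doubleStar]
  have h1 : A.filter (fun a => (doubleStar r t).Adj (Sum.inl (some i)) (Sum.inl a))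
      = A.filter (fun a => a = none) := by
    apply filter_congr; intro a _; cases a <;> simp [doubleStar, starOpt]
  erw [h1, h2, Finset.filter_eq', Finset.card_empty]
  split_ifs <;> simp

lemma degIn_dbl_inr_some (r t : ℕ) (A : Finset (Option (Fin (r - 1))))
    (B : Finset (Option (Fin (t - 1)))) (j : Fin (t - 1)) :
    degIn (doubleStar r t) (A.disjSum B) (Sum.inr (some j))
      = if none ∈ B then 1 else 0 := by
  classical
  rw [degIn_eq_filter, filter_disjSum', card_disjSum]
  have h1 : A.filter (fun a => (doubleStar r t).Adj (Sum.inr (some j)) (Sum.inl a)) = ∅ := by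
    apply Finset.filter_false_of_mem; intro a _; simp [doubleStar]
  have h2 : B.filter (fun b => (doubleStar r t).Adj (Sum.inr (some j)) (Sum.inr b))
      = B.filter (fun b => b = none) := by
    apply filter_congr; intro b _; cases b <;> simp [doubleStar, starOpt]
  erw [h1, h2, Finset.filter_eq', Finset.card_empty]
  split_ifs <;> simp

lemma dbl_counted_iff (r t : ℕ) (hr : 3 ≤ r) (ht : 3 ≤ t)
    (A : Finset (Option (Fin (r - 1)))) (B : Finset (Option (Fin (t - 1)))) :
    IsCountedAlliance (doubleStar r t) (A.disjSum B) ↔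
      (B = ∅ ∧ none ∈ A ∧ r + 2 ≤ 2 * A.card) ∨
      (A = ∅ ∧ none ∈ B ∧ t + 2 ≤ 2 * B.card) ∨
      (none ∈ A ∧ none ∈ B ∧ r ≤ 2 * A.card ∧ t ≤ 2 * B.card) := by
  constructor
  · rintro ⟨⟨hne, hall⟩, -⟩
    have hA : ∀ a ∈ A, none ∈ A := by
      intro a ha
      cases a with
      | none => exact ha
      | some i =>
        have h := hall (Sum.inl (some i)) (by simp [ha])
        rw [degOf_dbl_inl_some, degIn_dbl_inl_some] at h
        by_contra hn
        simp [hn] at h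
    have hB : ∀ b ∈ B, none ∈ B := by
      intro b hb
      cases b with
      | none => exact hb
      | some j =>
        have h := hall (Sum.inr (some j)) (by simp [hb])
        rw [degOf_dbl_inr_some, degIn_dbl_inr_some] at h
        by_contra hn
        simp [hn] at h
    rcases A.eq_empty_or_nonempty with hAe | ⟨a, ha⟩
    · have hBne : B.Nonempty := by
        obtain ⟨x, hx⟩ := hne
        cases x with
        | inl a => exact absurd (by simpa using hx) (by simp [hAe])
        | inr b => exact ⟨b, by simpa using hx⟩
      have hnB := hB _ hBne.choose_spec
      have h := hall (Sum.inr none) (by simp [hnB])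
      rw [degOf_dbl_inr_none r t (by omega), degIn_dbl_inr_none] at h
      rw [Finset.card_erase_of_mem hnB] at h
      have hc1 : 1 ≤ B.card := Finset.card_pos.2 ⟨_, hnB⟩
      refine Or.inr (Or.inl ⟨hAe, hnB, ?_⟩)
      simp [hAe] at h
      omega
    · have hnA := hA a ha
      rcases B.eq_empty_or_nonempty with hBe | ⟨b, hb⟩
      · have h := hall (Sum.inl none) (by simp [hnA])
        rw [degOf_dbl_inl_none r t (by omega), degIn_dbl_inl_none] at h
        rw [Finset.card_erase_of_mem hnA] at h
        have hc1 : 1 ≤ A.card := Finset.card_pos.2 ⟨_, hnA⟩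
        refine Or.inl ⟨hBe, hnA, ?_⟩
        simp [hBe] at h
        omega
      · have hnB := hB b hb
        have h1 := hall (Sum.inl none) (by simp [hnA])
        rw [degOf_dbl_inl_none r t (by omega), degIn_dbl_inl_none,
          Finset.card_erase_of_mem hnA, if_pos hnB] at h1
        have h2 := hall (Sum.inr none) (by simp [hnB])
        rw [degOf_dbl_inr_none r t (by omega), degIn_dbl_inr_none,
          Finset.card_erase_of_mem hnB, if_pos hnA] at h2
        have hc1 : 1 ≤ A.card := Finset.card_pos.2 ⟨_, hnA⟩
        have hc2 : 1 ≤ B.card := Finset.card_pos.2 ⟨_, hnB⟩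
        exact Or.inr (Or.inr ⟨hnA, hnB, by omega, by omega⟩)
  · intro h
    rcases h with ⟨hBe, hnA, hcard⟩ | ⟨hAe, hnB, hcard⟩ | ⟨hnA, hnB, hcr, hct⟩
    · subst hBe
      have hc1 : 1 ≤ A.card := Finset.card_pos.2 ⟨_, hnA⟩
      refine ⟨⟨⟨Sum.inl none, by simp [hnA]⟩, ?_⟩, ?_⟩
      · rintro (a | b) hv
        · cases a with
          | none =>
            rw [degOf_dbl_inl_none r t (by omega), degIn_dbl_inl_none,
              Finset.card_erase_of_mem hnA]
            simp only [Finset.notMem_empty, if_false]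
            omega
          | some i =>
            rw [degOf_dbl_inl_some, degIn_dbl_inl_some, if_pos hnA]
            omega
        · simp at hv
      · rw [SimpleGraph.connected_iff_exists_forall_reachable]
        refine ⟨⟨Sum.inl none, by simp [hnA]⟩, ?_⟩
        rintro ⟨(a | b), hw⟩
        · cases a with
          | none => exact SimpleGraph.Reachable.refl _
          | some i =>
            refine SimpleGraph.Adj.reachable ?_
            show (doubleStar r t).Adj (Sum.inl none) (Sum.inl (some i))
            simp [doubleStar, starOpt]
        · simp at hw
    · subst hAe
      have hc1 : 1 ≤ B.card := Finset.card_pos.2 ⟨_, hnB⟩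
      refine ⟨⟨⟨Sum.inr none, by simp [hnB]⟩, ?_⟩, ?_⟩
      · rintro (a | b) hv
        · simp at hv
        · cases b with
          | none =>
            rw [degOf_dbl_inr_none r t (by omega), degIn_dbl_inr_none,
              Finset.card_erase_of_mem hnB]
            simp only [Finset.notMem_empty, if_false]
            omega
          | some j =>
            rw [degOf_dbl_inr_some, degIn_dbl_inr_some, if_pos hnB]
            omega
      · rw [SimpleGraph.connected_iff_exists_forall_reachable]
        refine ⟨⟨Sum.inr none, by simp [hnB]⟩, ?_⟩
        rintro ⟨(a | b), hw⟩
        · simp at hw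
        · cases b with
          | none => exact SimpleGraph.Reachable.refl _
          | some j =>
            refine SimpleGraph.Adj.reachable ?_
            show (doubleStar r t).Adj (Sum.inr none) (Sum.inr (some j))
            simp [doubleStar, starOpt]
    · refine ⟨⟨⟨Sum.inl none, by simp [hnA]⟩, ?_⟩, ?_⟩
      · rintro (a | b) hv
        · cases a with
          | none =>
            rw [degOf_dbl_inl_none r t (by omega), degIn_dbl_inl_none,
              Finset.card_erase_of_mem hnA, if_pos hnB]
            omega
          | some i =>
            rw [degOf_dbl_inl_some, degIn_dbl_inl_some, if_pos hnA]
            omega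
        · cases b with
          | none =>
            rw [degOf_dbl_inr_none r t (by omega), degIn_dbl_inr_none,
              Finset.card_erase_of_mem hnB, if_pos hnA]
            omega
          | some j =>
            rw [degOf_dbl_inr_some, degIn_dbl_inr_some, if_pos hnB]
            omega
      · rw [SimpleGraph.connected_iff_exists_forall_reachable]
        refine ⟨⟨Sum.inl none, by simp [hnA]⟩, ?_⟩
        have hcr' : ((Sum.inr none : Option (Fin (r-1)) ⊕ Option (Fin (t-1))) ∈
            ((A.disjSum B : Finset _) : Set _)) := by simp [hnB]
        have hadjc : (doubleStar r t).Adj (Sum.inl none) (Sum.inr none) := by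
          simp [doubleStar]
        rintro ⟨(a | b), hw⟩
        · cases a with
          | none => exact SimpleGraph.Reachable.refl _
          | some i =>
            refine SimpleGraph.Adj.reachable ?_
            show (doubleStar r t).Adj (Sum.inl none) (Sum.inl (some i))
            simp [doubleStar, starOpt]
        · cases b with
          | none =>
            refine SimpleGraph.Adj.reachable ?_
            show (doubleStar r t).Adj (Sum.inl none) (Sum.inr none)
            exact hadjc
          | some j =>
            refine SimpleGraph.Reachable.trans (v := ⟨Sum.inr none, hcr'⟩) ?_ ?_
            · refine SimpleGraph.Adj.reachable ?_
              show (doubleStar r t).Adj (Sum.inl none) (Sum.inr none)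
              exact hadjc
            · refine SimpleGraph.Adj.reachable ?_
              show (doubleStar r t).Adj (Sum.inr none) (Sum.inr (some j))
              simp [doubleStar, starOpt]

open scoped Classical in
lemma dbl_poly_decomp (r t : ℕ) (hr : 3 ≤ r) (ht : 3 ≤ t) :
    alliancePoly (doubleStar r t)
      = starSum (r - 1) (r + 2) + starSum (t - 1) (t + 2)
        + starSum (r - 1) r * starSum (t - 1) t := by
  rw [alliancePoly_eq_sum]
  have hcard : ∀ S : Finset (Option (Fin (r - 1)) ⊕ Option (Fin (t - 1))),
      S.card = S.toLeft.card + S.toRight.card := by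
    intro S
    conv_lhs => rw [← Finset.toLeft_disjSum_toRight (u := S)]
    exact Finset.card_disjSum _ _
  have hchar : ∀ S : Finset (Option (Fin (r - 1)) ⊕ Option (Fin (t - 1))),
      IsCountedAlliance (doubleStar r t) S ↔
        (S.toRight = ∅ ∧ none ∈ S.toLeft ∧ r + 2 ≤ 2 * S.toLeft.card) ∨
        ((S.toLeft = ∅ ∧ none ∈ S.toRight ∧ t + 2 ≤ 2 * S.toRight.card) ∨
        (none ∈ S.toLeft ∧ none ∈ S.toRight ∧ r ≤ 2 * S.toLeft.card ∧
          t ≤ 2 * S.toRight.card)) := by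
    intro S
    have h := dbl_counted_iff r t hr ht S.toLeft S.toRight
    rwa [Finset.toLeft_disjSum_toRight] at h
  rw [Finset.filter_congr (fun S _ => hchar S), Finset.filter_or, Finset.filter_or]
  have hd1 : Disjoint
      ((univ : Finset (Finset (Option (Fin (r - 1)) ⊕ Option (Fin (t - 1))))).filter
        (fun S => S.toLeft = ∅ ∧ none ∈ S.toRight ∧ t + 2 ≤ 2 * S.toRight.card))
      ((univ : Finset (Finset (Option (Fin (r - 1)) ⊕ Option (Fin (t - 1))))).filter
        (fun S => none ∈ S.toLeft ∧ none ∈ S.toRight ∧ r ≤ 2 * S.toLeft.card ∧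
          t ≤ 2 * S.toRight.card)) := by
    rw [Finset.disjoint_left]
    rintro S h1 h2
    have g1 := (Finset.mem_filter.1 h1).2
    have g2 := (Finset.mem_filter.1 h2).2
    rw [g1.1] at g2
    exact absurd g2.1 (Finset.notMem_empty _)
  have hd2 : Disjoint
      ((univ : Finset (Finset (Option (Fin (r - 1)) ⊕ Option (Fin (t - 1))))).filter
        (fun S => S.toRight = ∅ ∧ none ∈ S.toLeft ∧ r + 2 ≤ 2 * S.toLeft.card))
      (((univ : Finset (Finset (Option (Fin (r - 1)) ⊕ Option (Fin (t - 1))))).filter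
        (fun S => S.toLeft = ∅ ∧ none ∈ S.toRight ∧ t + 2 ≤ 2 * S.toRight.card)) ∪
       ((univ : Finset (Finset (Option (Fin (r - 1)) ⊕ Option (Fin (t - 1))))).filter
        (fun S => none ∈ S.toLeft ∧ none ∈ S.toRight ∧ r ≤ 2 * S.toLeft.card ∧
          t ≤ 2 * S.toRight.card))) := by
    rw [Finset.disjoint_left]
    rintro S h1 h2
    have g1 := (Finset.mem_filter.1 h1).2
    rcases Finset.mem_union.1 h2 with h2 | h2
    · have g2 := (Finset.mem_filter.1 h2).2
      rw [g2.1] at g1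
      exact absurd g1.2.1 (Finset.notMem_empty _)
    · have g2 := (Finset.mem_filter.1 h2).2
      rw [g1.1] at g2
      exact absurd g2.2.1 (Finset.notMem_empty _)
  rw [Finset.sum_union hd2, Finset.sum_union hd1]
  have H1 : ∑ S ∈ (univ : Finset (Finset (Option (Fin (r - 1)) ⊕ Option (Fin (t - 1))))).filter
        (fun S => S.toRight = ∅ ∧ none ∈ S.toLeft ∧ r + 2 ≤ 2 * S.toLeft.card),
        (X : Polynomial ℤ) ^ S.card = starSum (r - 1) (r + 2) := by
    rw [starSum]
    refine Finset.sum_bij' (i := fun S _ => S.toLeft)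
      (j := fun A _ => A.disjSum ∅) ?_ ?_ ?_ ?_ ?_
    · intro S hS
      have h := (Finset.mem_filter.1 hS).2
      exact Finset.mem_filter.2 ⟨Finset.mem_univ _, h.2.1, h.2.2⟩
    · intro A hA
      have h := (Finset.mem_filter.1 hA).2
      refine Finset.mem_filter.2 ⟨Finset.mem_univ _, ?_⟩
      rw [Finset.toRight_disjSum, Finset.toLeft_disjSum]
      exact ⟨rfl, h.1, h.2⟩
    · intro S hS
      have h := (Finset.mem_filter.1 hS).2.1
      exact (congrArg (Finset.disjSum S.toLeft) h.symm).trans Finset.toLeft_disjSum_toRight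
    · intro A hA
      exact Finset.toLeft_disjSum
    · intro S hS
      have h := (Finset.mem_filter.1 hS).2.1
      rw [hcard S, h]
      simp
  have H2 : ∑ S ∈ (univ : Finset (Finset (Option (Fin (r - 1)) ⊕ Option (Fin (t - 1))))).filter
        (fun S => S.toLeft = ∅ ∧ none ∈ S.toRight ∧ t + 2 ≤ 2 * S.toRight.card),
        (X : Polynomial ℤ) ^ S.card = starSum (t - 1) (t + 2) := by
    rw [starSum]
    refine Finset.sum_bij' (i := fun S _ => S.toRight)
      (j := fun B _ => Finset.disjSum ∅ B) ?_ ?_ ?_ ?_ ?_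
    · intro S hS
      have h := (Finset.mem_filter.1 hS).2
      exact Finset.mem_filter.2 ⟨Finset.mem_univ _, h.2.1, h.2.2⟩
    · intro B hB
      have h := (Finset.mem_filter.1 hB).2
      refine Finset.mem_filter.2 ⟨Finset.mem_univ _, ?_⟩
      rw [Finset.toRight_disjSum, Finset.toLeft_disjSum]
      exact ⟨rfl, h.1, h.2⟩
    · intro S hS
      have h := (Finset.mem_filter.1 hS).2.1
      exact (congrArg (fun A => Finset.disjSum A S.toRight) h.symm).trans
        Finset.toLeft_disjSum_toRight
    · intro B hB
      exact Finset.toRight_disjSum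
    · intro S hS
      have h := (Finset.mem_filter.1 hS).2.1
      rw [hcard S, h]
      simp
  have H3 : ∑ S ∈ (univ : Finset (Finset (Option (Fin (r - 1)) ⊕ Option (Fin (t - 1))))).filter
        (fun S => none ∈ S.toLeft ∧ none ∈ S.toRight ∧ r ≤ 2 * S.toLeft.card ∧
          t ≤ 2 * S.toRight.card),
        (X : Polynomial ℤ) ^ S.card = starSum (r - 1) r * starSum (t - 1) t := by
    rw [starSum, starSum, Finset.sum_mul_sum, ← Finset.sum_product']
    refine Finset.sum_bij' (i := fun S _ => (S.toLeft, S.toRight))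
      (j := fun p _ => p.1.disjSum p.2) ?_ ?_ ?_ ?_ ?_
    · intro S hS
      have h := (Finset.mem_filter.1 hS).2
      exact Finset.mem_product.2
        ⟨Finset.mem_filter.2 ⟨Finset.mem_univ _, h.1, h.2.2.1⟩,
         Finset.mem_filter.2 ⟨Finset.mem_univ _, h.2.1, h.2.2.2⟩⟩
    · intro p hp
      have h1 := (Finset.mem_filter.1 (Finset.mem_product.1 hp).1).2
      have h2 := (Finset.mem_filter.1 (Finset.mem_product.1 hp).2).2
      refine Finset.mem_filter.2 ⟨Finset.mem_univ _, ?_⟩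
      rw [Finset.toLeft_disjSum, Finset.toRight_disjSum]
      exact ⟨h1.1, h2.1, h1.2, h2.2⟩
    · intro S hS
      exact Finset.toLeft_disjSum_toRight
    · intro p hp
      simp [Finset.toLeft_disjSum, Finset.toRight_disjSum]
    · intro S hS
      rw [hcard S, pow_add]
  rw [H1, H2, H3]
  ring

/-- For `r, t ≥ 3`, the strong alliance polynomial of the double star graph
`S_{r,t}` satisfies
`a(S_{r,t};x) = a(S_r;x) + a(S_t;x) − C(r−1,(r−1)/2)x^{(r+1)/2} − C(t−1,(t−1)/2)x^{(t+1)/2}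
  + (C(r−1,r/2−1)x^{r/2} + a(S_r;x))·(C(t−1,t/2−1)x^{t/2} + a(S_t;x))`,
where a binomial coefficient `C(z,y)` is `0` whenever `y` is not an integer: the third
term vanishes when `r` is even, the fourth when `t` is even, and the extra factors vanish
when `r` (resp. `t`) is odd. -/
theorem stmt_15 (r t : ℕ) (hr : 3 ≤ r) (ht : 3 ≤ t) :
    alliancePoly (doubleStar r t) =
      alliancePoly (starOpt (r - 1)) + alliancePoly (starOpt (t - 1))
      - (if Odd r then Polynomial.C (((r - 1).choose ((r - 1) / 2) : ℕ) : ℤ)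
            * Polynomial.X ^ ((r + 1) / 2) else 0)
      - (if Odd t then Polynomial.C (((t - 1).choose ((t - 1) / 2) : ℕ) : ℤ)
            * Polynomial.X ^ ((t + 1) / 2) else 0)
      + ((if Even r then Polynomial.C (((r - 1).choose (r / 2 - 1) : ℕ) : ℤ)
              * Polynomial.X ^ (r / 2) else 0) + alliancePoly (starOpt (r - 1))) *
        ((if Even t then Polynomial.C (((t - 1).choose (t / 2 - 1) : ℕ) : ℤ)
              * Polynomial.X ^ (t / 2) else 0) + alliancePoly (starOpt (t - 1)))  := by
  classical
  have e1 : alliancePoly (starOpt (r - 1)) = starSum (r - 1) (r + 1) := by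
    rw [alliancePoly_starOpt]
    congr 1
    omega
  have e2 : alliancePoly (starOpt (t - 1)) = starSum (t - 1) (t + 1) := by
    rw [alliancePoly_starOpt]
    congr 1
    omega
  have s_r1 := starSum_split (r - 1) (r + 1) (by omega)
  have s_t1 := starSum_split (t - 1) (t + 1) (by omega)
  rw [show r + 1 + 1 = r + 2 from by omega] at s_r1
  rw [show t + 1 + 1 = t + 2 from by omega] at s_t1
  have s_r0 := starSum_split (r - 1) r (by omega)
  have s_t0 := starSum_split (t - 1) t (by omega)
  have hOr : (if Even (r + 1) then Polynomial.C (((r - 1).choose ((r + 1) / 2 - 1) : ℕ) : ℤ)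
        * Polynomial.X ^ ((r + 1) / 2) else 0)
      = (if Odd r then Polynomial.C (((r - 1).choose ((r - 1) / 2) : ℕ) : ℤ)
        * Polynomial.X ^ ((r + 1) / 2) else 0) := by
    rcases Nat.even_or_odd r with he | ho
    · rw [if_neg (by rw [Nat.even_add_one]; exact not_not_intro he),
        if_neg (Nat.not_odd_iff_even.2 he)]
    · have hi : (r + 1) / 2 - 1 = (r - 1) / 2 := by
        obtain ⟨k, hk⟩ := ho
        omega
      rw [if_pos (Odd.add_one ho), if_pos ho, hi]
  have hOt : (if Even (t + 1) then Polynomial.C (((t - 1).choose ((t + 1) / 2 - 1) : ℕ) : ℤ)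
        * Polynomial.X ^ ((t + 1) / 2) else 0)
      = (if Odd t then Polynomial.C (((t - 1).choose ((t - 1) / 2) : ℕ) : ℤ)
        * Polynomial.X ^ ((t + 1) / 2) else 0) := by
    rcases Nat.even_or_odd t with he | ho
    · rw [if_neg (by rw [Nat.even_add_one]; exact not_not_intro he),
        if_neg (Nat.not_odd_iff_even.2 he)]
    · have hi : (t + 1) / 2 - 1 = (t - 1) / 2 := by
        obtain ⟨k, hk⟩ := ho
        omega
      rw [if_pos (Odd.add_one ho), if_pos ho, hi]
  rw [dbl_poly_decomp r t hr ht, e1, e2, ← hOr, ← hOt, ← s_r0, ← s_t0, s_r1, s_t1]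
  ring
end

section
/- For all n, m ≥ 1, the coefficient sequence (a_k(K_{n,m}))_{k=0}^{n+m} of the strong alliance polynomial of the complete bipartite graph K_{n,m} is log-concave (a_k² ≥ a_{k−1} a_{k+1} for all 0 < k < n+m) and hence unimodal. -/
open SimpleGraph Polynomial Finset

/-- A sequence `f 0, …, f n` is unimodal: it increases up to some mode `k ≤ n` and
decreases afterwards. -/
def UnimodalOn (f : ℕ → ℕ) (n : ℕ) : Prop :=
  ∃ k ≤ n, (∀ i j, i ≤ j → j ≤ k → f i ≤ f j) ∧ (∀ i j, k ≤ i → i ≤ j → j ≤ n → f j ≤ f i)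


section Aux


/-- truncated binomial -/
def Pb (n a : ℕ) : ℕ := if n ≤ 2*a then n.choose a else 0

lemma choose_tp2 {n i j : ℕ} (h1 : 1 ≤ i) (hij : i < j) (hjn : j ≤ n) :
    n.choose (i-1) * n.choose j ≤ n.choose i * n.choose (j-1) := by
  obtain ⟨i', rfl⟩ : ∃ i', i = i' + 1 := ⟨i - 1, by omega⟩
  obtain ⟨j', rfl⟩ : ∃ j', j = j' + 1 := ⟨j - 1, by omega⟩
  simp only [Nat.add_sub_cancel]
  have e1 : n.choose (i'+1) * (i'+1) = n.choose i' * (n - i') := Nat.choose_succ_right_eq n i'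
  have e2 : n.choose (j'+1) * (j'+1) = n.choose j' * (n - j') := Nat.choose_succ_right_eq n j'
  have h3 : (n-j')*(i'+1) ≤ (n-i')*(j'+1) :=
    Nat.mul_le_mul (Nat.sub_le_sub_left (by omega) n) (by omega)
  have main : (n.choose i' * n.choose (j'+1)) * ((i'+1)*(j'+1)) ≤
      (n.choose (i'+1) * n.choose j') * ((i'+1)*(j'+1)) := by
    calc (n.choose i' * n.choose (j'+1)) * ((i'+1)*(j'+1))
        = n.choose i' * (n.choose (j'+1) * (j'+1)) * (i'+1) := by ring
      _ = n.choose i' * (n.choose j' * (n-j')) * (i'+1) := by rw [e2]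
      _ = (n.choose i' * n.choose j') * ((n-j')*(i'+1)) := by ring
      _ ≤ (n.choose i' * n.choose j') * ((n-i')*(j'+1)) := Nat.mul_le_mul_left _ h3
      _ = (n.choose (i'+1) * (i'+1)) * n.choose j' * (j'+1) := by rw [e1]; ring
      _ = (n.choose (i'+1) * n.choose j') * ((i'+1)*(j'+1)) := by ring
  exact Nat.le_of_mul_le_mul_right main (by positivity)

lemma Pb_tp2 {n : ℕ} (hn : 1 ≤ n) {i j : ℕ} (h : i < j) :
    Pb n (i-1) * Pb n j ≤ Pb n i * Pb n (j-1) := by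
  unfold Pb
  by_cases h1 : n ≤ 2*(i-1)
  · by_cases h2 : j ≤ n
    · have hi : 1 ≤ i := by omega
      rw [if_pos h1, if_pos (by omega), if_pos (by omega), if_pos (by omega)]
      exact choose_tp2 hi h h2
    · have hz : n.choose j = 0 := Nat.choose_eq_zero_of_lt (by omega)
      rw [hz]
      simp
  · rw [if_neg h1, zero_mul]
    exact Nat.zero_le _

lemma lagrange (s : Finset ℕ) (a b c d : ℕ → ℤ) :
    2 * ((∑ i ∈ s, a i * c i) * (∑ i ∈ s, b i * d i)
        - (∑ i ∈ s, a i * d i) * (∑ i ∈ s, b i * c i))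
      = ∑ i ∈ s, ∑ j ∈ s, (a i * b j - a j * b i) * (c i * d j - c j * d i) := by
  have expand : ∀ i ∈ s, ∀ _j : Unit, True := fun _ _ _ => trivial
  have h1 : ∑ i ∈ s, ∑ j ∈ s, (a i * b j - a j * b i) * (c i * d j - c j * d i)
      = ∑ i ∈ s, ∑ j ∈ s, ((a i * c i) * (b j * d j) - (a i * d i) * (b j * c j)
          - (b i * c i) * (a j * d j) + (b i * d i) * (a j * c j)) := by
    refine Finset.sum_congr rfl fun i _ => Finset.sum_congr rfl fun j _ => by ring
  rw [h1]
  simp only [Finset.sum_add_distrib, Finset.sum_sub_distrib, ← Finset.sum_mul, ← Finset.mul_sum]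
  ring

def Cc (n m : ℕ) : ℕ → ℕ := fun k => ∑ a ∈ Finset.range (n+1), Pb n a * Pb m (k - a)

lemma Pb_zero {n : ℕ} (hn : 1 ≤ n) : Pb n 0 = 0 := by
  unfold Pb; rw [if_neg (by omega)]

lemma Pb_succ_self (n : ℕ) : Pb n (n+1) = 0 := by
  unfold Pb; rw [Nat.choose_succ_self]; simp

lemma cc_lc (n m : ℕ) (hn : 1 ≤ n) (hm : 1 ≤ m) (k : ℕ) :
    Cc n m (k-1) * Cc n m (k+1) ≤ Cc n m k ^ 2 := by
  set pz : ℕ → ℤ := fun i => (Pb n i : ℤ) with hpz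
  set qz : ℕ → ℤ := fun i => (Pb m i : ℤ) with hqz
  have hpz0 : pz 0 = 0 := by simp [hpz, Pb_zero hn]
  have hqz0 : qz 0 = 0 := by simp [hqz, Pb_zero hm]
  have hpzlast : pz (n+1) = 0 := by simp [hpz, Pb_succ_self]
  have hCc : ∀ j : ℕ, (Cc n m j : ℤ) = ∑ i ∈ Finset.range (n+1), pz i * qz (j - i) := by
    intro j; unfold Cc; push_cast; rfl
  set s := Finset.range (n+2) with hs
  have hac : ∑ i ∈ s, pz i * qz (k - i) = (Cc n m k : ℤ) := by
    rw [hs, Finset.sum_range_succ, hpzlast, hCc]; ring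
  have had : ∑ i ∈ s, pz i * qz (k + 1 - i) = (Cc n m (k+1) : ℤ) := by
    rw [hs, Finset.sum_range_succ, hpzlast, hCc]; ring
  have hbd : ∑ i ∈ s, pz (i-1) * qz (k + 1 - i) = (Cc n m k : ℤ) := by
    rw [hs, Finset.sum_range_succ' (fun i => pz (i-1) * qz (k + 1 - i)) (n+1)]
    have e : ∀ i ∈ Finset.range (n+1), pz (i+1-1) * qz (k+1-(i+1)) = pz i * qz (k - i) := by
      intro i _; congr 2 <;> omega
    rw [Finset.sum_congr rfl e, hCc]
    simp only [Nat.zero_sub, hpz0, zero_mul, add_zero]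
  have hbc : ∑ i ∈ s, pz (i-1) * qz (k - i) = (Cc n m (k-1) : ℤ) := by
    rw [hs, Finset.sum_range_succ' (fun i => pz (i-1) * qz (k - i)) (n+1)]
    have e : ∀ i ∈ Finset.range (n+1), pz (i+1-1) * qz (k-(i+1)) = pz i * qz ((k-1) - i) := by
      intro i _; congr 2 <;> omega
    rw [Finset.sum_congr rfl e, hCc]
    simp only [Nat.zero_sub, hpz0, zero_mul, add_zero]
  have key1 : ∀ i j : ℕ, i < j → pz j * pz (i-1) ≤ pz i * pz (j-1) := by
    intro i j hij
    have := Pb_tp2 hn hij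
    simp only [hpz]
    have h1' : Pb n j * Pb n (i-1) ≤ Pb n i * Pb n (j-1) := by rw [mul_comm]; exact this
    exact_mod_cast h1'
  have key2 : ∀ i j : ℕ, i < j → qz (k-j) * qz (k+1-i) ≤ qz (k-i) * qz (k+1-j) := by
    intro i j hij
    by_cases hjk : j ≤ k
    · have h2 := Pb_tp2 hm (show k+1-j < k+1-i by omega)
      have e1 : (k+1-j) - 1 = k - j := by omega
      have e2 : (k+1-i) - 1 = k - i := by omega
      rw [e1, e2] at h2
      simp only [hqz]
      have h2' : Pb m (k-j) * Pb m (k+1-i) ≤ Pb m (k-i) * Pb m (k+1-j) := by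
        rw [mul_comm (Pb m (k-i))]; exact h2
      exact_mod_cast h2'
    · have : k - j = 0 := by omega
      rw [this, hqz0, zero_mul]
      simp only [hqz]
      positivity
  have nonneg : 0 ≤ ∑ i ∈ s, ∑ j ∈ s,
      (pz i * pz (j-1) - pz j * pz (i-1)) * (qz (k-i) * qz (k+1-j) - qz (k-j) * qz (k+1-i)) := by
    refine Finset.sum_nonneg fun i _ => Finset.sum_nonneg fun j _ => ?_
    rcases lt_trichotomy i j with h | h | h
    · exact mul_nonneg (sub_nonneg.2 (key1 i j h)) (sub_nonneg.2 (key2 i j h))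
    · subst h; ring_nf; simp
    · nlinarith [key1 j i h, key2 j i h]
  have lag := lagrange s (fun i => pz i) (fun i => pz (i-1)) (fun i => qz (k-i)) (fun i => qz (k+1-i))
  rw [hac, had, hbd, hbc] at lag
  have final : (Cc n m (k-1) : ℤ) * Cc n m (k+1) ≤ (Cc n m k : ℤ) * Cc n m k := by
    nlinarith [nonneg, lag]
  calc Cc n m (k-1) * Cc n m (k+1) ≤ Cc n m k * Cc n m k := by exact_mod_cast final
    _ = Cc n m k ^ 2 := (pow_two _).symm

lemma Pb_pos {n a : ℕ} : 0 < Pb n a ↔ (n ≤ 2*a ∧ a ≤ n) := by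
  unfold Pb
  constructor
  · intro h
    by_cases h1 : n ≤ 2*a
    · rw [if_pos h1] at h
      exact ⟨h1, by by_contra hc; rw [Nat.choose_eq_zero_of_lt (by omega)] at h; omega⟩
    · rw [if_neg h1] at h; omega
  · rintro ⟨h1, h2⟩
    rw [if_pos h1]
    exact Nat.choose_pos h2

lemma cc_pos (n m : ℕ) (hn : 1 ≤ n) (hm : 1 ≤ m) (k : ℕ) :
    0 < Cc n m k ↔ ((n+1)/2 + (m+1)/2 ≤ k ∧ k ≤ n + m) := by
  constructor
  · intro h
    have : ∃ a ∈ Finset.range (n+1), 0 < Pb n a * Pb m (k - a) := by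
      by_contra hc
      push_neg at hc
      have : Cc n m k = 0 := Finset.sum_eq_zero fun a ha => by have := hc a ha; omega
      omega
    obtain ⟨a, -, hpos⟩ := this
    have h1 : 0 < Pb n a := by
      rcases Nat.eq_zero_or_pos (Pb n a) with h | h
      · rw [h, zero_mul] at hpos; omega
      · exact h
    have h2 : 0 < Pb m (k - a) := by
      rcases Nat.eq_zero_or_pos (Pb m (k - a)) with h | h
      · rw [h, mul_zero] at hpos; omega
      · exact h
    rw [Pb_pos] at h1 h2
    omega
  · rintro ⟨h1, h2⟩
    have key : ∃ a ≤ n, n ≤ 2*a ∧ m ≤ 2*(k-a) ∧ k - a ≤ m := by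
      rcases le_or_gt (k - m) ((n+1)/2) with h | h
      · exact ⟨(n+1)/2, by omega, by omega, by omega, by omega⟩
      · exact ⟨k - m, by omega, by omega, by omega, by omega⟩
    obtain ⟨a, han, hg1, hg2, hg3⟩ := key
    apply Finset.sum_pos' (fun i _ => Nat.zero_le _)
    refine ⟨a, Finset.mem_range.2 (by omega), ?_⟩
    apply Nat.mul_pos
    · exact Pb_pos.2 ⟨hg1, han⟩
    · exact Pb_pos.2 ⟨hg2, hg3⟩

lemma unimodalOn_of_lc (f : ℕ → ℕ) (N l r : ℕ) (hlr : l ≤ r) (hrN : r ≤ N)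
    (hsupp : ∀ i, 0 < f i ↔ (l ≤ i ∧ i ≤ r))
    (hlc : ∀ k, 0 < k → f (k-1) * f (k+1) ≤ f k * f k) :
    (∃ k ≤ N, (∀ i j, i ≤ j → j ≤ k → f i ≤ f j) ∧ (∀ i j, k ≤ i → i ≤ j → j ≤ N → f j ≤ f i)) := by
  obtain ⟨k, hkmem, hkmax⟩ := Finset.exists_max_image (Finset.range (N+1)) f ⟨0, by simp⟩
  rw [Finset.mem_range] at hkmem
  have hkN : k ≤ N := by omega
  have hmax : ∀ j, j ≤ N → f j ≤ f k := fun j hj => hkmax j (Finset.mem_range.2 (by omega))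
  have hflpos : 0 < f l := (hsupp l).2 ⟨le_refl l, hlr⟩
  have hfkpos : 0 < f k := lt_of_lt_of_le hflpos (hmax l (by omega))
  have hlk : l ≤ k ∧ k ≤ r := (hsupp k).1 hfkpos
  -- decreasing after k
  have down : ∀ i, k ≤ i → f (i+1) ≤ f i := by
    intro i hi
    induction i, hi using Nat.le_induction with
    | base =>
      by_cases h : k + 1 ≤ N
      · exact hmax (k+1) h
      · have : ¬ (0 < f (k+1)) := fun hp => by have := (hsupp (k+1)).1 hp; omega
        omega
    | succ i hki ih =>
      have ih' : f (i+1) ≤ f i := ih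
      by_cases hp : 0 < f (i+1)
      · have := hlc (i+1) (by omega)
        simp only [Nat.add_sub_cancel] at this
        have chain : f (i+1) * f (i+2) ≤ f (i+1) * f (i+1) := by
          calc f (i+1) * f (i+2) ≤ f i * f (i+2) := Nat.mul_le_mul_right _ ih'
            _ ≤ f (i+1) * f (i+1) := this
        exact Nat.le_of_mul_le_mul_left chain hp
      · have hir : r ≤ i := by
          by_contra hc
          exact hp ((hsupp (i+1)).2 ⟨by omega, by omega⟩)
        have h2 : f (i+2) = 0 := by
          by_contra hc
          have := (hsupp (i+2)).1 (Nat.pos_of_ne_zero hc)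
          omega
        have e : i + 1 + 1 = i + 2 := rfl
        rw [e, h2]
        exact Nat.zero_le _
  -- increasing before k
  have up : ∀ d i, i + d + 1 = k → f i ≤ f (i+1) := by
    intro d
    induction d with
    | zero =>
      intro i hi
      have e : i + 1 = k := by omega
      rw [e]
      exact hmax i (by omega)
    | succ d ih =>
      intro i hi
      have hstep : f (i+1) ≤ f (i+2) := ih (i+1) (by omega)
      by_cases hp : 0 < f i
      · have hli : l ≤ i := ((hsupp i).1 hp).1
        have hfip : 0 < f (i+1) := (hsupp (i+1)).2 ⟨by omega, by omega⟩
        have := hlc (i+1) (by omega)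
        simp only [Nat.add_sub_cancel] at this
        have chain : f i * f (i+1) ≤ f (i+1) * f (i+1) := by
          calc f i * f (i+1) ≤ f i * f (i+2) := Nat.mul_le_mul_left _ hstep
            _ ≤ f (i+1) * f (i+1) := this
        exact Nat.le_of_mul_le_mul_right chain hfip
      · omega
  refine ⟨k, hkN, ?_, ?_⟩
  · intro i j hij hjk
    clear hkmem
    induction j with
    | zero => exact le_of_eq (congrArg f (by omega))
    | succ j ihj =>
      rcases Nat.lt_or_ge i (j+1) with h | h
      · exact le_trans (ihj (by omega) (by omega)) (up (k - j - 1) j (by omega))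
      · exact le_of_eq (congrArg f (by omega))
  · intro i j hki hij hjN
    induction j with
    | zero => exact le_of_eq (congrArg f (by omega))
    | succ j ihj =>
      rcases Nat.lt_or_ge i (j+1) with h | h
      · exact le_trans (down j (by omega)) (ihj (by omega) (by omega))
      · exact le_of_eq (congrArg f (by omega))

section Graph

variable {n m : ℕ}

lemma nbhd_inl (a : Fin n) :
    (completeBipartiteGraph (Fin n) (Fin m)).neighborSet (Sum.inl a) = Set.range Sum.inr := by
  ext w; cases w <;> simp [SimpleGraph.neighborSet]

lemma nbhd_inr (b : Fin m) :
    (completeBipartiteGraph (Fin n) (Fin m)).neighborSet (Sum.inr b) = Set.range Sum.inl := by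
  ext w; cases w <;> simp [SimpleGraph.neighborSet]

lemma degOf_inl (a : Fin n) :
    degOf (completeBipartiteGraph (Fin n) (Fin m)) (Sum.inl a) = m := by
  unfold degOf
  rw [nbhd_inl, ← Nat.card_coe_set_eq, Nat.card_range_of_injective Sum.inr_injective,
    Nat.card_eq_fintype_card, Fintype.card_fin]

lemma degOf_inr (b : Fin m) :
    degOf (completeBipartiteGraph (Fin n) (Fin m)) (Sum.inr b) = n := by
  unfold degOf
  rw [nbhd_inr, ← Nat.card_coe_set_eq, Nat.card_range_of_injective Sum.inl_injective,
    Nat.card_eq_fintype_card, Fintype.card_fin]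

lemma degIn_inl (S : Finset (Fin n ⊕ Fin m)) (a : Fin n) :
    degIn (completeBipartiteGraph (Fin n) (Fin m)) S (Sum.inl a) = S.toRight.card := by
  unfold degIn
  rw [nbhd_inl]
  have h : (S : Set (Fin n ⊕ Fin m)) ∩ Set.range Sum.inr
      = ((S.toRight.map ⟨Sum.inr, Sum.inr_injective⟩ : Finset (Fin n ⊕ Fin m)) :
          Set (Fin n ⊕ Fin m)) := by
    ext x; cases x <;> simp
  rw [h, Set.ncard_coe_finset, Finset.card_map]

lemma degIn_inr (S : Finset (Fin n ⊕ Fin m)) (b : Fin m) :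
    degIn (completeBipartiteGraph (Fin n) (Fin m)) S (Sum.inr b) = S.toLeft.card := by
  unfold degIn
  rw [nbhd_inr]
  have h : (S : Set (Fin n ⊕ Fin m)) ∩ Set.range Sum.inl
      = ((S.toLeft.map ⟨Sum.inl, Sum.inl_injective⟩ : Finset (Fin n ⊕ Fin m)) :
          Set (Fin n ⊕ Fin m)) := by
    ext x; cases x <;> simp
  rw [h, Set.ncard_coe_finset, Finset.card_map]

lemma counted_iff (hn : 1 ≤ n) (hm : 1 ≤ m) (S : Finset (Fin n ⊕ Fin m)) :
    IsCountedAlliance (completeBipartiteGraph (Fin n) (Fin m)) S ↔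
      n ≤ 2 * S.toLeft.card ∧ m ≤ 2 * S.toRight.card := by
  set G := completeBipartiteGraph (Fin n) (Fin m) with hG
  constructor
  · rintro ⟨⟨⟨v, hv⟩, hall⟩, -⟩
    have hL : ∀ a : Fin n, Sum.inl a ∈ S → m ≤ 2 * S.toRight.card := fun a ha => by
      have := hall _ ha; rwa [degOf_inl, degIn_inl] at this
    have hR : ∀ b : Fin m, Sum.inr b ∈ S → n ≤ 2 * S.toLeft.card := fun b hb => by
      have := hall _ hb; rwa [degOf_inr, degIn_inr] at this
    cases v with
    | inl a =>
      have h2 := hL a hv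
      obtain ⟨b, hb⟩ := Finset.card_pos.1 (show 0 < S.toRight.card by omega)
      exact ⟨hR b (Finset.mem_toRight.1 hb), h2⟩
    | inr b =>
      have h1 := hR b hv
      obtain ⟨a, ha⟩ := Finset.card_pos.1 (show 0 < S.toLeft.card by omega)
      exact ⟨h1, hL a (Finset.mem_toLeft.1 ha)⟩
  · rintro ⟨h1, h2⟩
    obtain ⟨a0, ha0⟩ := Finset.card_pos.1 (show 0 < S.toLeft.card by omega)
    obtain ⟨b0, hb0⟩ := Finset.card_pos.1 (show 0 < S.toRight.card by omega)
    rw [Finset.mem_toLeft] at ha0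
    rw [Finset.mem_toRight] at hb0
    have adj_lr : ∀ (a : Fin n) (b : Fin m) (ha : Sum.inl a ∈ S) (hb : Sum.inr b ∈ S),
        (G.induce (S : Set (Fin n ⊕ Fin m))).Adj ⟨Sum.inl a, ha⟩ ⟨Sum.inr b, hb⟩ := by
      intro a b ha hb
      show G.Adj (Sum.inl a) (Sum.inr b)
      simp [hG]
    refine ⟨⟨⟨Sum.inl a0, ha0⟩, fun v hv => ?_⟩, ?_⟩
    · cases v with
      | inl a => rw [degOf_inl, degIn_inl]; exact h2
      | inr b => rw [degOf_inr, degIn_inr]; exact h1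
    · rw [SimpleGraph.connected_iff]
      refine ⟨?_, ⟨⟨Sum.inl a0, ha0⟩⟩⟩
      rintro ⟨x, hx⟩ ⟨y, hy⟩
      cases x with
      | inl a =>
        cases y with
        | inl a' =>
          exact ((adj_lr a b0 hx hb0).reachable).trans ((adj_lr a' b0 hy hb0).symm.reachable)
        | inr b => exact (adj_lr a b hx hy).reachable
      | inr b =>
        cases y with
        | inl a => exact ((adj_lr a b hy hx).symm.reachable)
        | inr b' =>
          exact ((adj_lr a0 b ha0 hx).symm.reachable).trans ((adj_lr a0 b' ha0 hy).reachable)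

end Graph


lemma aCoeff_eq_s16 (hn : 1 ≤ n) (hm : 1 ≤ m) (k : ℕ) :
    aCoeff (completeBipartiteGraph (Fin n) (Fin m)) k = Cc n m k := by
  classical
  unfold aCoeff
  have hset : {S : Finset (Fin n ⊕ Fin m) | S.card = k ∧
      IsCountedAlliance (completeBipartiteGraph (Fin n) (Fin m)) S}
      = ((Finset.univ.filter (fun S : Finset (Fin n ⊕ Fin m) =>
          S.card = k ∧ n ≤ 2 * S.toLeft.card ∧ m ≤ 2 * S.toRight.card) :
            Finset (Finset (Fin n ⊕ Fin m))) : Set (Finset (Fin n ⊕ Fin m))) := by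
    ext S
    simp [counted_iff hn hm]
  rw [hset, Set.ncard_coe_finset]
  -- transfer to pairs
  set t := Finset.univ.filter (fun AB : Finset (Fin n) × Finset (Fin m) =>
      AB.1.card + AB.2.card = k ∧ n ≤ 2 * AB.1.card ∧ m ≤ 2 * AB.2.card) with ht
  have hcard : (Finset.univ.filter (fun S : Finset (Fin n ⊕ Fin m) =>
      S.card = k ∧ n ≤ 2 * S.toLeft.card ∧ m ≤ 2 * S.toRight.card)).card = t.card := by
    refine Finset.card_bij' (fun S _ => (S.toLeft, S.toRight))
      (fun AB _ => AB.1.disjSum AB.2) ?_ ?_ ?_ ?_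
    · intro S hS
      rw [Finset.mem_filter] at hS ⊢
      obtain ⟨-, h1, h2, h3⟩ := hS
      exact ⟨Finset.mem_univ _, by rw [Finset.card_toLeft_add_card_toRight]; exact h1, h2, h3⟩
    · intro AB hAB
      rw [Finset.mem_filter] at hAB ⊢
      obtain ⟨-, h1, h2, h3⟩ := hAB
      refine ⟨Finset.mem_univ _, ?_, ?_, ?_⟩
      · rw [Finset.card_disjSum]; exact h1
      · rw [Finset.toLeft_disjSum]; exact h2
      · rw [Finset.toRight_disjSum]; exact h3
    · intro S _; exact Finset.toLeft_disjSum_toRight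
    · intro AB _; simp
  rw [hcard]
  rw [Finset.card_eq_sum_card_fiberwise (f := fun AB => AB.1.card) (t := Finset.range (n+1))
    (fun AB _ => Finset.mem_range.2 (Nat.lt_succ_of_le
      (le_trans (Finset.card_le_univ _) (by simp))))]
  unfold Cc
  refine Finset.sum_congr rfl fun a _ => ?_
  by_cases hc : n ≤ 2*a ∧ m ≤ 2*(k-a)
  · have hak : a < k := by omega
    have e : t.filter (fun AB => AB.1.card = a)
        = (Finset.univ.filter (fun A : Finset (Fin n) => A.card = a)) ×ˢ
          (Finset.univ.filter (fun B : Finset (Fin m) => B.card = k - a)) := by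
      ext ⟨A, B⟩
      simp only [ht, Finset.mem_filter, Finset.mem_univ, true_and, Finset.mem_product]
      constructor
      · rintro ⟨⟨e1, e2, e3⟩, e4⟩; omega
      · rintro ⟨e1, e2⟩; omega
    rw [e, Finset.card_product]
    have cA : (Finset.univ.filter (fun A : Finset (Fin n) => A.card = a)).card = n.choose a := by
      rw [← Finset.powerset_univ, ← Finset.powersetCard_eq_filter, Finset.card_powersetCard,
        Finset.card_univ, Fintype.card_fin]
    have cB : (Finset.univ.filter (fun B : Finset (Fin m) => B.card = k - a)).card
        = m.choose (k-a) := by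
      rw [← Finset.powerset_univ, ← Finset.powersetCard_eq_filter, Finset.card_powersetCard,
        Finset.card_univ, Fintype.card_fin]
    rw [cA, cB]
    unfold Pb
    rw [if_pos hc.1, if_pos hc.2]
  · have e : t.filter (fun AB => AB.1.card = a) = ∅ := by
      rw [Finset.filter_eq_empty_iff]
      intro AB hAB
      rw [ht, Finset.mem_filter] at hAB
      obtain ⟨-, e1, e2, e3⟩ := hAB
      intro e4
      omega
    rw [e, Finset.card_empty]
    unfold Pb
    rcases not_and_or.1 hc with h | h
    · rw [if_neg h, zero_mul]
    · rw [if_neg h, mul_zero]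

end Aux

/-- For `n, m ≥ 1`, the coefficient sequence `(a_k(K_{n,m}))_{k=0}^{n+m}` of
the strong alliance polynomial of the complete bipartite graph `K_{n,m}` is log-concave
(`a_k² ≥ a_{k−1}·a_{k+1}` for `0 < k < n+m`) and hence unimodal. -/
theorem stmt_16 (n m : ℕ) (hn : 1 ≤ n) (hm : 1 ≤ m) :
    (∀ k : ℕ, 0 < k → k < n + m →
      aCoeff (completeBipartiteGraph (Fin n) (Fin m)) (k - 1) *
          aCoeff (completeBipartiteGraph (Fin n) (Fin m)) (k + 1) ≤
        (aCoeff (completeBipartiteGraph (Fin n) (Fin m)) k) ^ 2) ∧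
    UnimodalOn (aCoeff (completeBipartiteGraph (Fin n) (Fin m))) (n + m) := by
  have hfun : aCoeff (completeBipartiteGraph (Fin n) (Fin m)) = Cc n m :=
    funext fun k => aCoeff_eq_s16 hn hm k
  constructor
  · intro k hk1 hk2
    simp only [hfun]
    rw [pow_two]
    exact (pow_two (Cc n m k)) ▸ cc_lc n m hn hm k
  · rw [hfun]
    exact unimodalOn_of_lc (Cc n m) (n+m) ((n+1)/2 + (m+1)/2) (n+m) (by omega) le_rfl
      (cc_pos n m hn hm) (fun k _ => by
        have h := cc_lc n m hn hm k
        rwa [pow_two] at h)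
end
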